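/- arXiv:1010.5079 — 8 statements merged into one kernel-verified Lean document; each statement's English description precedes it below -/
import Mathlib

section
/- For all graphs G and H, with G connected and |G| = n > σ(H), the Ramsey number satisfies R(G,H) ≥ (χ(H)−1)(n−1) + σ(H), where σ(H) is the minimum size of a colour class in a proper χ(H)-colouring of H. -/
open SimpleGraph Finset

/-- `Embeds H G`: there is a copy of `H` in `G` (injective edge-preserving map). -/
def Embeds {α β : Type*} (H : SimpleGraph α) (G : SimpleGraph β) : Prop :=
  ∃ f : α → β, Function.Injective f ∧ ∀ u v, H.Adj u v → G.Adj (f u) (f v)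

/-- `HomTo H G`: there is a graph homomorphism from `H` to `G`. -/
def HomTo {α β : Type*} (H : SimpleGraph α) (G : SimpleGraph β) : Prop :=
  ∃ f : α → β, ∀ u v, H.Adj u v → G.Adj (f u) (f v)

/-- Every red/blue colouring (given by its red graph `R`) of `K_N`
contains a red copy of `G` or a blue copy of `H`. -/
def RamseyProp {α β : Type*} (G : SimpleGraph α) (H : SimpleGraph β) (N : ℕ) : Prop :=
  ∀ R : SimpleGraph (Fin N), Embeds G R ∨ Embeds H Rᶜ

/-- The Ramsey number `R(G,H)`. -/
noncomputable def ramseyNumber {α β : Type*} (G : SimpleGraph α) (H : SimpleGraph β) : ℕ :=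
  sInf {N | RamseyProp G H N}

/-- `σ(H)`: the minimum size of a colour class in a proper colouring of `H`
with exactly `χ(H)` colours. -/
noncomputable def sigmaH {V : Type*} [Fintype V] (H : SimpleGraph V) : ℕ :=
  sInf { s | ∃ C : H.Coloring (Fin H.chromaticNumber.toNat), ∃ i,
      s = Nat.card {v // C v = i} }

/-- The `k`-th power of the path on `n` vertices. -/
def pathPower (n k : ℕ) : SimpleGraph (Fin n) where
  Adj i j := i ≠ j ∧ Nat.dist i.val j.val ≤ k
  symm := by
    constructor
    intro i j h
    exact ⟨Ne.symm h.1, by rw [Nat.dist_comm]; exact h.2⟩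
  loopless := by
    constructor
    intro i h
    exact h.1 rfl

/-- The `k`-th power of the cycle on `n` vertices. -/
def cyclePower (n k : ℕ) : SimpleGraph (Fin n) where
  Adj i j := i ≠ j ∧ min (Nat.dist i.val j.val) (n - Nat.dist i.val j.val) ≤ k
  symm := by
    constructor
    intro i j h
    refine ⟨Ne.symm h.1, ?_⟩
    rw [Nat.dist_comm]
    exact h.2
  loopless := by
    constructor
    intro i h
    exact h.1 rfl

/-!
Burr's colouring: split the vertices of `K_M`, `M = (χ(H) - 1)(n - 1) + σ(H) - 1`, into consecutive
blocks of `n - 1`, and colour an edge red inside a block and blue between blocks. Every red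
component has fewer than `n` vertices, so there is no red copy of the connected graph `G`. A blue
copy of `H` would colour `H` properly by blocks with `χ(H)` colours; the last colour class is
nonempty (every class of a `χ(H)`-colouring is) and lies in the last block, which has fewer than
`σ(H)` vertices. Ramsey's theorem guarantees that `R(G, H)` is not a junk `sInf ∅ = 0`.
-/

namespace SimpleGraph

theorem not_cliqueFreeOn_or_compl_cliqueFreeOn {V : Type*} (R : SimpleGraph V) (a b : ℕ)
    (s : Finset V) (hs : (a + b).choose a ≤ #s) : ¬R.CliqueFreeOn s a ∨ ¬Rᶜ.CliqueFreeOn s b := by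
  classical
  induction a generalizing b s with
  | zero => exact .inl fun h => (cliqueFreeOn_empty _).1 (h.subset _ (Set.empty_subset _)) rfl
  | succ a iha =>
    induction b generalizing s with
    | zero => exact .inr fun h => (cliqueFreeOn_empty _).1 (h.subset _ (Set.empty_subset _)) rfl
    | succ b ihb =>
      by_contra! ⟨hR, hRc⟩
      obtain ⟨v, hv⟩ : s.Nonempty := card_pos.1 ((Nat.choose_pos (by omega)).trans_le hs)
      set A := s.filter (R.Adj v)
      set B := s.filter (Rᶜ.Adj v)
      have hA : #A < (a + (b + 1)).choose a := by
        by_contra! h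
        refine (iha (b + 1) A h).elim (fun h => h ?_) (fun h => h (hRc.subset _ ?_))
        · convert hR.of_succ _ hv using 1; ext; simp [A]
        · exact coe_subset.2 (filter_subset _ _)
      have hB : #B < (a + 1 + b).choose (a + 1) := by
        by_contra! h
        refine (ihb B h).elim (fun h => h (hR.subset _ ?_)) (fun h => h ?_)
        · exact coe_subset.2 (filter_subset _ _)
        · convert hRc.of_succ _ hv using 1; ext; simp [B]
      have hcover : s ⊆ insert v (A ∪ B) := by
        intro w hw
        by_cases hvw : v = w
        · simp [hvw]
        · by_cases hadj : R.Adj v w <;> simp [A, B, hw, hvw, hadj]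
      have hs_le : #s ≤ #A + #B + 1 := (card_le_card hcover).trans
        ((card_insert_le _ _).trans (Nat.succ_le_succ (card_union_le A B)))
      have hpascal : (a + 1 + (b + 1)).choose (a + 1) =
          (a + (b + 1)).choose a + (a + 1 + b).choose (a + 1) := by
        rw [show a + 1 + (b + 1) = a + (b + 1) + 1 by omega, Nat.choose_succ_succ,
          show a + (b + 1) = a + 1 + b by omega]
      omega

theorem Reachable.eq_of_forall_adj {V ι : Type*} {G : SimpleGraph V} {c : V → ι}
    (hc : ∀ u v, G.Adj u v → c u = c v) {u v : V} (h : G.Reachable u v) : c u = c v := by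
  rw [reachable_iff_reflTransGen] at h
  induction h with
  | refl => rfl
  | tail _ hadj ih => exact ih.trans (hc _ _ hadj)

end SimpleGraph

theorem embeds_of_not_cliqueFree {α β : Type*} [Fintype α] (G : SimpleGraph α)
    {R : SimpleGraph β} (h : ¬R.CliqueFree (Fintype.card α)) : Embeds G R := by
  obtain ⟨f⟩ := (not_cliqueFree_iff_top_isContained _).1 h
  let e := Fintype.equivFin α
  exact ⟨f ∘ e, f.injective.comp e.injective,
    fun u v huv => f.toHom.map_adj (by simpa using huv.ne)⟩

theorem exists_ramseyProp {α β : Type*} [Fintype α] [Fintype β] (G : SimpleGraph α)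
    (H : SimpleGraph β) : ∃ N, RamseyProp G H N := by
  refine ⟨(Fintype.card α + Fintype.card β).choose (Fintype.card α), fun R => ?_⟩
  have := R.not_cliqueFreeOn_or_compl_cliqueFreeOn (Fintype.card α) (Fintype.card β) univ
    (by simp)
  rw [coe_univ, cliqueFreeOn_univ, cliqueFreeOn_univ] at this
  exact this.imp (embeds_of_not_cliqueFree G) (embeds_of_not_cliqueFree H)

theorem card_le_of_forall_div_eq {V : Type*} [Fintype V] {g : V → ℕ} (hg : g.Injective)
    {c d : ℕ} (hd : 0 < d) (hc : ∀ v, g v / d = c) : Fintype.card V ≤ d := by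
  have hmaps : ∀ v ∈ univ, g v ∈ Ico (c * d) (c * d + d) := fun v _ => by
    have hdiv := Nat.div_add_mod' (g v) d
    have := Nat.mod_lt (g v) hd
    rw [hc v] at hdiv
    simp only [mem_Ico]
    omega
  simpa using card_le_card_of_injOn g hmaps hg.injOn

theorem card_le_sub_of_forall_div_eq {V : Type*} [Fintype V] {g : V → ℕ} (hg : g.Injective)
    {c d M : ℕ} (hM : ∀ v, g v < M) (hc : ∀ v, g v / d = c) : Fintype.card V ≤ M - c * d := by
  have hmaps : ∀ v ∈ univ, g v ∈ Ico (c * d) M := fun v _ => by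
    have := Nat.div_mul_le_self (g v) d
    rw [hc v] at this
    simpa [this] using hM v
  simpa using card_le_card_of_injOn g hmaps hg.injOn

def blockGraph (M d : ℕ) : SimpleGraph (Fin M) :=
  (⊤ : SimpleGraph ℕ).comap fun i => i.val / d

theorem not_embeds_compl_blockGraph {V : Type*} [Fintype V] {G : SimpleGraph V}
    (hG : G.Connected) {M d : ℕ} (hd : 0 < d) (hV : d < Fintype.card V) :
    ¬Embeds G (blockGraph M d)ᶜ := by
  rintro ⟨f, hf, hadj⟩
  obtain ⟨v₀⟩ := hG.nonempty
  have hblock : ∀ v, (f v : ℕ) / d = (f v₀ : ℕ) / d := fun v =>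
    (hG.preconnected v v₀).eq_of_forall_adj fun _ _ huv => by
      simpa [blockGraph] using (hadj _ _ huv).2
  exact hV.not_ge (card_le_of_forall_div_eq (Fin.val_injective.comp hf) hd hblock)

theorem sigmaH_eq_zero_of_chromaticNumber_toNat_eq_zero {V : Type*} [Fintype V]
    {H : SimpleGraph V} (h : H.chromaticNumber.toNat = 0) : sigmaH H = 0 :=
  Nat.sInf_eq_zero.2 <| .inr <| Set.eq_empty_of_forall_notMem fun _ ⟨_, i, _⟩ =>
    (Fin.cast h i).elim0

theorem not_embeds_blockGraph {V : Type*} [Fintype V] {H : SimpleGraph V} {M d : ℕ}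
    (hσ : sigmaH H ≤ d) (hM : M < (H.chromaticNumber.toNat - 1) * d + sigmaH H) :
    ¬Embeds H (blockGraph M d) := by
  rintro ⟨f, hf, hadj⟩
  set k := H.chromaticNumber.toNat
  obtain hk | hk := Nat.eq_zero_or_pos k
  · rw [hk, sigmaH_eq_zero_of_chromaticNumber_toNat_eq_zero hk] at hM
    omega
  have hM_le : M ≤ d * k := by
    have := Nat.sub_one_mul k d
    have := Nat.le_mul_of_pos_left d hk
    rw [mul_comm]
    omega
  let C : H.Coloring (Fin k) :=
    Coloring.mk (fun v => ⟨(f v : ℕ) / d, Nat.div_lt_of_lt_mul ((f v).isLt.trans_le hM_le)⟩)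
      fun huv heq => by
        have := hadj _ _ huv
        simp only [blockGraph, comap_adj, top_adj] at this
        exact this (congrArg Fin.val heq)
  let last : Fin k := ⟨k - 1, by omega⟩
  have hσ_le : sigmaH H ≤ Nat.card {v // C v = last} := Nat.sInf_le ⟨C, last, rfl⟩
  have hlast_le : Nat.card {v // C v = last} ≤ M - (k - 1) * d := by
    rw [Nat.card_eq_fintype_card]
    exact card_le_sub_of_forall_div_eq (Fin.val_injective.comp (hf.comp Subtype.val_injective))
      (fun w => (f w.1).isLt) (fun w => congrArg Fin.val w.2)
  have hlast_pos : 0 < Nat.card {v // C v = last} := by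
    obtain ⟨v, hv⟩ :=
      le_chromaticNumber_iff_forall_surjective.1 (ENat.natCast_toNat_le_self _) C last
    have : Nonempty {v // C v = last} := ⟨⟨v, hv⟩⟩
    exact Nat.card_pos
  omega

/-- Burr's lower bound: `R(G,H) ≥ (χ(H)−1)(n−1) + σ(H)` for connected `G` on `n > σ(H)` vertices. -/
theorem burr_lower_bound {VG VH : Type} [Fintype VG] [Fintype VH]
    (G : SimpleGraph VG) (H : SimpleGraph VH) (n : ℕ)
    (hG : G.Connected) (hn : Fintype.card VG = n) (hσ : sigmaH H < n) :
    (H.chromaticNumber.toNat - 1) * (n - 1) + sigmaH H ≤ ramseyNumber G H := by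
  obtain ⟨N, hN⟩ := exists_ramseyProp G H
  refine le_csInf ⟨N, hN⟩ fun M hM => ?_
  by_contra! hM_lt
  obtain hd | hd := Nat.eq_zero_or_pos (n - 1)
  · rw [hd, mul_zero, zero_add] at hM_lt
    omega
  rcases hM (blockGraph M (n - 1))ᶜ with hred | hblue
  · exact not_embeds_compl_blockGraph hG hd (by omega) hred
  · exact not_embeds_blockGraph (by omega) hM_lt (compl_compl (blockGraph M (n - 1)) ▸ hblue)
end

section
/- For all natural numbers s and n with n ≥ s², any n-vertex graph which does not contain K_{s,s} as a subgraph has at most 2·n^{2 − 1/s} edges. -/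
/-!
Double count pairs `(v, S)` with `S` an `s`-set of neighbours of `v`: as `G` contains no `K_{s,s}`,
every `s`-set has at most `s - 1` common neighbours, so `∑ v, (deg v).choose s ≤ (s - 1) n.choose s`.
Bounding `d.choose s` below by `(d + 1 - s) ^ s / s!` and applying the power mean inequality to the
truncated degrees gives `(∑ v, (deg v + 1 - s)) ^ s ≤ (s - 1) n ^ (2s - 1)`, so the truncated degrees
sum to at most `2 n ^ (2 - 1/s)`. The truncation loses at most `n (s - 1) ≤ n ^ (2 - 1/s)`, which is
where `n ≥ s²` is needed.
-/

open SimpleGraph Finset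

lemma embeds_iff_isContained {α β : Type*} {H : SimpleGraph α} {G : SimpleGraph β} :
    Embeds H G ↔ H ⊑ G :=
  ⟨fun ⟨f, hf, hadj⟩ ↦ ⟨⟨⟨f, hadj _ _⟩, hf⟩⟩,
    fun ⟨c⟩ ↦ ⟨c, c.injective, fun _ _ ↦ c.toHom.map_adj⟩⟩

namespace SimpleGraph

variable {V : Type*} [Fintype V] {G : SimpleGraph V} [DecidableRel G.Adj]

lemma two_mul_card_edgeFinset_le (s : ℕ) :
    2 * #G.edgeFinset ≤ ∑ v, (G.degree v + 1 - s) + Fintype.card V * (s - 1) := by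
  rw [← sum_degrees_eq_twice_card_edges, ← card_univ, ← smul_eq_mul, ← sum_const,
    ← sum_add_distrib]
  exact sum_le_sum fun v _ ↦ by omega

variable [DecidableEq V]

lemma card_filter_subset_neighborFinset_lt {α β : Type*} [Fintype α] [Fintype β]
    (hG : ¬ completeBipartiteGraph α β ⊑ G) {S : Finset V} (hS : #S = Fintype.card α) :
    #{v | S ⊆ G.neighborFinset v} < Fintype.card β := by
  by_contra! h
  obtain ⟨T, hT, hTcard⟩ := exists_subset_card_eq h
  refine hG (completeBipartiteGraph_isContained_iff.mpr ⟨S, T, hS, hTcard, fun u hu v hv ↦ ?_⟩)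
  exact ((mem_neighborFinset ..).mp ((mem_filter.mp (hT hv)).2 hu)).symm

lemma sum_choose_degree_le {s t : ℕ}
    (h : ∀ S : Finset V, #S = s → #{v | S ⊆ G.neighborFinset v} ≤ t) :
    ∑ v, (G.degree v).choose s ≤ t * (Fintype.card V).choose s := by
  let r : V → Finset V → Prop := fun v S ↦ S ⊆ G.neighborFinset v
  calc ∑ v, (G.degree v).choose s
      = ∑ v, #((univ.powersetCard s).bipartiteAbove r v) := by
        refine sum_congr rfl fun v _ ↦ ?_
        rw [← card_neighborFinset_eq_degree, ← card_powersetCard]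
        congr 1
        ext S
        simp [r, and_comm]
    _ = ∑ S ∈ univ.powersetCard s, #(univ.bipartiteBelow r S) :=
        sum_card_bipartiteAbove_eq_sum_card_bipartiteBelow r
    _ ≤ ∑ _S ∈ univ.powersetCard s, t :=
        sum_le_sum fun S hS ↦ h S (mem_powersetCard.mp hS).2
    _ = t * (Fintype.card V).choose s := by
        rw [sum_const, card_powersetCard, card_univ, smul_eq_mul, mul_comm]

lemma sum_pow_degree_add_one_sub_le {s t : ℕ}
    (h : ∀ S : Finset V, #S = s → #{v | S ⊆ G.neighborFinset v} ≤ t) :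
    ∑ v, (G.degree v + 1 - s) ^ s ≤ t * Fintype.card V ^ s :=
  calc ∑ v, (G.degree v + 1 - s) ^ s
      ≤ ∑ v, s.factorial * (G.degree v).choose s := sum_le_sum fun v _ ↦ by
        rw [← Nat.descFactorial_eq_factorial_mul_choose]
        exact Nat.pow_sub_le_descFactorial _ _
    _ ≤ s.factorial * (t * (Fintype.card V).choose s) := by
        rw [← mul_sum]
        exact Nat.mul_le_mul_left _ (sum_choose_degree_le h)
    _ = t * (Fintype.card V).descFactorial s := by
        rw [Nat.descFactorial_eq_factorial_mul_choose]
        ring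
    _ ≤ t * Fintype.card V ^ s := Nat.mul_le_mul_left _ (Nat.descFactorial_le_pow _ _)

lemma pow_sum_degree_add_one_sub_le {s t : ℕ} (hs : s ≠ 0)
    (h : ∀ S : Finset V, #S = s → #{v | S ⊆ G.neighborFinset v} ≤ t) :
    (∑ v, (G.degree v + 1 - s)) ^ s ≤ t * Fintype.card V ^ (2 * s - 1) := by
  obtain ⟨k, rfl⟩ := Nat.exists_eq_succ_of_ne_zero hs
  calc (∑ v, (G.degree v + 1 - (k + 1))) ^ (k + 1)
      ≤ #(univ : Finset V) ^ k * ∑ v, (G.degree v + 1 - (k + 1)) ^ (k + 1) :=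
        pow_sum_le_card_mul_sum_pow (fun _ _ ↦ Nat.zero_le _) k
    _ ≤ Fintype.card V ^ k * (t * Fintype.card V ^ (k + 1)) := by
        rw [card_univ]
        exact Nat.mul_le_mul_left _ (sum_pow_degree_add_one_sub_le h)
    _ = t * Fintype.card V ^ (2 * (k + 1) - 1) := by
        rw [show 2 * (k + 1) - 1 = k + (k + 1) by omega, pow_add]
        ring

end SimpleGraph

lemma rpow_two_sub_one_div_pow {x : ℝ} (hx : 0 ≤ x) {s : ℕ} (hs : s ≠ 0) :
    (x ^ (2 - 1 / s : ℝ)) ^ s = x ^ (2 * s - 1) := by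
  rw [← Real.rpow_mul_natCast hx, ← Real.rpow_natCast]
  congr 1
  have hs' : (s : ℝ) ≠ 0 := by exact_mod_cast hs
  rw [Nat.cast_sub (by omega), Nat.cast_mul]
  field_simp
  ring

lemma le_two_mul_rpow_of_pow_le {a x : ℝ} (hx : 0 ≤ x) {s : ℕ} (hs : s ≠ 0)
    (h : a ^ s ≤ 2 ^ s * x ^ (2 * s - 1)) : a ≤ 2 * x ^ (2 - 1 / s : ℝ) :=
  le_of_pow_le_pow_left₀ hs (by positivity) (by rwa [mul_pow, rpow_two_sub_one_div_pow hx hs])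

lemma mul_sub_one_le_rpow {x : ℝ} {s : ℕ} (hsx : (s : ℝ) ^ 2 ≤ x) :
    x * (s - 1) ≤ x ^ (2 - 1 / s : ℝ) := by
  have hx : 0 ≤ x := (sq_nonneg _).trans hsx
  rcases le_or_gt s 1 with hs | hs
  · have : (s : ℝ) - 1 ≤ 0 := by
      rw [sub_nonpos]
      exact_mod_cast hs
    exact (mul_nonpos_of_nonneg_of_nonpos hx this).trans (Real.rpow_nonneg hx _)
  have hs2 : (2 : ℝ) ≤ s := by exact_mod_cast hs
  have hx1 : 1 ≤ x := by nlinarith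
  calc x * (s - 1) ≤ x * x ^ (1 / 2 : ℝ) := by
        rw [← Real.sqrt_eq_rpow]
        gcongr
        exact (sub_le_self _ zero_le_one).trans (Real.le_sqrt_of_sq_le hsx)
    _ ≤ x * x ^ (1 - 1 / s : ℝ) := by
        gcongr
        rw [le_sub_comm, one_div_le (by positivity) (by norm_num)]
        linarith
    _ = x ^ (2 - 1 / s : ℝ) := by
        rw [show (2 - 1 / s : ℝ) = 1 + (1 - 1 / s) by ring, Real.rpow_add (by linarith),
          Real.rpow_one]

/-- Kővári–Sós–Turán: an `n`-vertex `K_{s,s}`-free graph (with `n ≥ s²`)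
has at most `2 n^{2 - 1/s}` edges. -/
theorem kst_count {V : Type} [Fintype V] (G : SimpleGraph V) [DecidableRel G.Adj]
    (s n : ℕ) (hn : Fintype.card V = n) (hns : s ^ 2 ≤ n)
    (hKss : ¬ Embeds (completeBipartiteGraph (Fin s) (Fin s)) G) :
    (G.edgeFinset.card : ℝ) ≤ 2 * (n : ℝ) ^ ((2 : ℝ) - 1 / s) := by
  classical
  subst hn
  rw [embeds_iff_isContained] at hKss
  have hcommon (S : Finset V) (hS : #S = s) : #{v | S ⊆ G.neighborFinset v} ≤ s - 1 :=
    Nat.le_sub_one_of_lt <| by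
      simpa using card_filter_subset_neighborFinset_lt hKss (by simpa using hS)
  have hs : s ≠ 0 := by
    rintro rfl
    simpa using card_filter_subset_neighborFinset_lt hKss (S := ∅) (by simp)
  set A := ∑ v, (G.degree v + 1 - s)
  have hA : (A : ℝ) ≤ 2 * (Fintype.card V : ℝ) ^ ((2 : ℝ) - 1 / s) := by
    refine le_two_mul_rpow_of_pow_le (by positivity) hs ?_
    have hnat : A ^ s ≤ 2 ^ s * Fintype.card V ^ (2 * s - 1) :=
      (pow_sum_degree_add_one_sub_le hs hcommon).trans
        (Nat.mul_le_mul_right _ ((s.sub_le 1).trans Nat.lt_two_pow_self.le))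
    exact_mod_cast hnat
  have hE : 2 * (#G.edgeFinset : ℝ) ≤ A + Fintype.card V * ((s : ℝ) - 1) := by
    have := two_mul_card_edgeFinset_le (G := G) s
    rw [← Nat.cast_pred (Nat.pos_of_ne_zero hs)]
    exact_mod_cast this
  have hsub := mul_sub_one_le_rpow (x := Fintype.card V) (s := s) (by exact_mod_cast hns)
  have hpow_nonneg := Real.rpow_nonneg (Nat.cast_nonneg (Fintype.card V)) ((2 : ℝ) - 1 / s)
  linarith
end

section
/- Let G be a bipartite graph with parts X and Y which does not contain a copy of K_{s,s}. If p is a real number with 2·(s/|Y|)^{1/s} ≤ p ≤ 1, then at most 2s/p vertices in X have degree greater than p·|Y|. -/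
open SimpleGraph Finset

/-! Let `W` be the set of vertices of `X` of degree greater than `p|Y|`, and suppose `|W| > 2s/p`.
Since every `s`-subset of `W` has fewer than `s` common neighbours, counting pairs `(y, S)` with
`S` an `s`-subset of `N(y) ∩ W` gives `∑_y C(d_W(y), s) ≤ (s - 1) C(|W|, s)`. On the other hand
`∑_y d_W(y) > p|W||Y|`, so by convexity `∑_y d_W(y) (d_W(y) - 1) ⋯ (d_W(y) - s + 1)` is at least
`|Y| (p|W|/2)^s`, which the hypothesis on `p` makes at least `s |W|^s`: a contradiction. -/

/-- The power-mean inequality, applied to `(d - k + 1)⁺ ^ k ≤ d.descFactorial k`. -/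
lemma card_mul_pow_le_sum_descFactorial {ι : Type*} (t : Finset ι) (d : ι → ℕ) {k : ℕ}
    (hk : 0 < k) {x : ℝ} (hx : 0 ≤ x) (h : #t * x ≤ ∑ b ∈ t, ((d b : ℝ) - (k - 1))) :
    #t * x ^ k ≤ ∑ b ∈ t, ((d b).descFactorial k : ℝ) := by
  obtain ⟨m, rfl⟩ : ∃ m, k = m + 1 := ⟨k - 1, by omega⟩
  rcases t.eq_empty_or_nonempty with rfl | ht
  · simp
  set f : ι → ℝ := fun b => ((d b - m : ℕ) : ℝ)
  have hsum : #t * x ≤ ∑ b ∈ t, f b := by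
    refine h.trans (sum_le_sum fun b _ => ?_)
    have hle : (d b : ℝ) ≤ ((d b - m : ℕ) : ℝ) + m := by
      exact_mod_cast le_tsub_add (b := d b) (a := m)
    push_cast
    linarith
  have hpow : ∀ b ∈ t, f b ^ (m + 1) ≤ (d b).descFactorial (m + 1) := by
    intro b _
    have := Nat.pow_sub_le_descFactorial (d b) (m + 1)
    rw [Nat.add_sub_add_right] at this
    change ((d b - m : ℕ) : ℝ) ^ (m + 1) ≤ _
    exact_mod_cast this
  have hcard : (0 : ℝ) < #t ^ m := by positivity
  refine le_of_mul_le_mul_left ?_ hcard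
  calc (#t : ℝ) ^ m * (#t * x ^ (m + 1))
      = (#t * x) ^ (m + 1) := by ring
    _ ≤ (∑ b ∈ t, f b) ^ (m + 1) := pow_le_pow_left₀ (by positivity) hsum _
    _ ≤ #t ^ m * ∑ b ∈ t, f b ^ (m + 1) :=
        pow_sum_le_card_mul_sum_pow (fun b _ => Nat.cast_nonneg _) m
    _ ≤ #t ^ m * ∑ b ∈ t, ((d b).descFactorial (m + 1) : ℝ) :=
        mul_le_mul_of_nonneg_left (sum_le_sum hpow) hcard.le

lemma le_pow_of_rpow_one_div_le {a b : ℝ} {k : ℕ} (ha : 0 ≤ a) (hk : k ≠ 0)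
    (h : a ^ ((1 : ℝ) / k) ≤ b) : a ≤ b ^ k := by
  simpa [Real.rpow_inv_natCast_pow ha hk] using pow_le_pow_left₀ (by positivity) h k

namespace Finset

variable {α β : Type*} (r : α → β → Prop) [∀ a b, Decidable (r a b)]
  (s : Finset α) (t : Finset β) (k : ℕ)

lemma sum_choose_card_bipartiteBelow :
    ∑ b ∈ t, (#(s.bipartiteBelow r b)).choose k =
      ∑ S ∈ s.powersetCard k, #{b ∈ t | ∀ a ∈ S, r a b} := by
  have hstars : ∀ b, (s.bipartiteBelow r b).powersetCard k =
      {S ∈ s.powersetCard k | ∀ a ∈ S, r a b} := by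
    intro b
    ext S
    simp only [mem_powersetCard, mem_filter, bipartiteBelow, subset_iff]
    grind
  simp_rw [← card_powersetCard, hstars, card_filter]
  exact sum_comm

variable {r s t k}

lemma sum_choose_card_bipartiteBelow_le
    (hfree : ¬ ∃ (S : Finset α) (T : Finset β), S ⊆ s ∧ T ⊆ t ∧ #S = k ∧ #T = k ∧
      ∀ a ∈ S, ∀ b ∈ T, r a b) :
    ∑ b ∈ t, (#(s.bipartiteBelow r b)).choose k ≤ (k - 1) * (#s).choose k := by
  have hcommon : ∀ S ∈ s.powersetCard k, #{b ∈ t | ∀ a ∈ S, r a b} ≤ k - 1 := by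
    intro S hS
    by_contra! hlarge
    obtain ⟨T, hT, hTcard⟩ := exists_subset_card_eq (show k ≤ #{b ∈ t | ∀ a ∈ S, r a b} by omega)
    rw [mem_powersetCard] at hS
    exact hfree ⟨S, T, hS.1, hT.trans (filter_subset _ _), hS.2, hTcard,
      fun a ha b hb => (mem_filter.mp (hT hb)).2 a ha⟩
  calc ∑ b ∈ t, (#(s.bipartiteBelow r b)).choose k
      = ∑ S ∈ s.powersetCard k, #{b ∈ t | ∀ a ∈ S, r a b} := sum_choose_card_bipartiteBelow ..
    _ ≤ ∑ _S ∈ s.powersetCard k, (k - 1) := sum_le_sum hcommon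
    _ = (k - 1) * (#s).choose k := by rw [sum_const, card_powersetCard, smul_eq_mul, mul_comm]

lemma sum_descFactorial_card_bipartiteBelow_le
    (hfree : ¬ ∃ (S : Finset α) (T : Finset β), S ⊆ s ∧ T ⊆ t ∧ #S = k ∧ #T = k ∧
      ∀ a ∈ S, ∀ b ∈ T, r a b) :
    ∑ b ∈ t, (#(s.bipartiteBelow r b)).descFactorial k ≤ (k - 1) * #s ^ k :=
  calc ∑ b ∈ t, (#(s.bipartiteBelow r b)).descFactorial k
      = k.factorial * ∑ b ∈ t, (#(s.bipartiteBelow r b)).choose k := by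
        simp_rw [Nat.descFactorial_eq_factorial_mul_choose, mul_sum]
    _ ≤ k.factorial * ((k - 1) * (#s).choose k) :=
        Nat.mul_le_mul_left _ (sum_choose_card_bipartiteBelow_le hfree)
    _ = (k - 1) * (#s).descFactorial k := by
        rw [Nat.descFactorial_eq_factorial_mul_choose]; ring
    _ ≤ (k - 1) * #s ^ k := Nat.mul_le_mul_left _ (Nat.descFactorial_le_pow _ _)

lemma card_mul_pow_le_of_le_card_bipartiteAbove (hk : 0 < k)
    (hfree : ¬ ∃ (S : Finset α) (T : Finset β), S ⊆ s ∧ T ⊆ t ∧ #S = k ∧ #T = k ∧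
      ∀ a ∈ S, ∀ b ∈ T, r a b)
    {p : ℝ} (hp : 0 ≤ p) (hdeg : ∀ a ∈ s, p * #t ≤ #(t.bipartiteAbove r a))
    (hsp : 2 * (k - 1) ≤ #s * p) :
    #t * (#s * p / 2) ^ k ≤ (k - 1) * #s ^ k := by
  have hedges : #s * p * #t ≤ ∑ b ∈ t, (#(s.bipartiteBelow r b) : ℝ) :=
    calc (#s * p * #t : ℝ) = ∑ _a ∈ s, p * #t := by rw [sum_const, nsmul_eq_mul, mul_assoc]
      _ ≤ ∑ a ∈ s, (#(t.bipartiteAbove r a) : ℝ) := sum_le_sum hdeg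
      _ = ∑ b ∈ t, (#(s.bipartiteBelow r b) : ℝ) := by
          exact_mod_cast sum_card_bipartiteAbove_eq_sum_card_bipartiteBelow _
  have hstars : ∑ b ∈ t, ((#(s.bipartiteBelow r b)).descFactorial k : ℝ) ≤ (k - 1) * #s ^ k := by
    rw [← Nat.cast_pred hk]
    exact_mod_cast sum_descFactorial_card_bipartiteBelow_le hfree
  refine le_trans ?_ hstars
  refine card_mul_pow_le_sum_descFactorial t _ hk (by positivity) ?_
  rw [sum_sub_distrib, sum_const, nsmul_eq_mul]
  nlinarith

end Finset

theorem kst_bipartite_general {V : Type}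
    (G : SimpleGraph V) [DecidableRel G.Adj]
    (X Y : Finset V)
    (s : ℕ) (p : ℝ)
    (hKss : ¬ ∃ (S T : Finset V), S ⊆ X ∧ T ⊆ Y ∧ S.card = s ∧ T.card = s ∧
        ∀ u ∈ S, ∀ v ∈ T, G.Adj u v)
    (hp1 : 2 * ((s : ℝ) / Y.card) ^ ((1 : ℝ) / s) ≤ p) :
    ((X.filter fun x => p * Y.card < ((Y.filter fun y => G.Adj x y).card : ℝ)).card : ℝ)
      ≤ 2 * s / p := by
  set W := X.filter fun x => p * #Y < (#(Y.bipartiteAbove G.Adj x) : ℝ)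
  have hs : 0 < s := Nat.pos_of_ne_zero fun hs => hKss ⟨∅, ∅, by simp [hs]⟩
  rcases Y.eq_empty_or_nonempty with rfl | hY
  · have hp : 0 ≤ p := (by positivity : (0 : ℝ) ≤ 2 * _).trans hp1
    simp only [card_empty, CharP.cast_eq_zero, mul_zero, filter_empty, lt_self_iff_false,
      filter_false, ge_iff_le]
    positivity
  have hsY_pos : (0 : ℝ) < s / #Y := by have := hY.card_pos; positivity
  have hp : 0 < p := (mul_pos two_pos (Real.rpow_pos_of_pos hsY_pos _)).trans_le hp1
  have hsY : (s : ℝ) ≤ #Y * (p / 2) ^ s := by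
    have := le_pow_of_rpow_one_div_le hsY_pos.le hs.ne' ((le_div_iff₀' two_pos).2 hp1)
    rwa [div_le_iff₀ (by positivity), mul_comm] at this
  by_contra! hW
  have hWp : 2 * s < #W * p := by rwa [div_lt_iff₀ hp] at hW
  have hcount := card_mul_pow_le_of_le_card_bipartiteAbove (s := W) (r := G.Adj) hs
    (fun ⟨S, T, hS, hT, h⟩ => hKss ⟨S, T, hS.trans (filter_subset _ _), hT, h⟩) hp.le
    (fun x hx => (mem_filter.1 hx).2.le) (by linarith)
  have hW_pos : (0 : ℝ) < #W ^ s := by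
    have := pos_of_mul_pos_left ((by positivity : (0 : ℝ) < 2 * s).trans hWp) hp.le
    positivity
  have : (s : ℝ) * #W ^ s ≤ (s - 1) * #W ^ s :=
    calc (s : ℝ) * #W ^ s ≤ #Y * (p / 2) ^ s * #W ^ s := by gcongr
      _ = #Y * (#W * p / 2) ^ s := by ring
      _ ≤ (s - 1) * #W ^ s := hcount
  nlinarith

/-- Bipartite Kővári–Sós–Turán: in a `K_{s,s}`-free bipartite graph with parts `X, Y`,
for `2(s/|Y|)^{1/s} ≤ p ≤ 1`, at most `2s/p` vertices of `X` have degree greater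
than `p|Y|`. -/
theorem kst_bipartite {V : Type} [Fintype V] [DecidableEq V]
    (G : SimpleGraph V) [DecidableRel G.Adj]
    (X Y : Finset V) (hdisj : Disjoint X Y)
    (hbip : ∀ u v, G.Adj u v → (u ∈ X ∧ v ∈ Y) ∨ (u ∈ Y ∧ v ∈ X))
    (s : ℕ) (p : ℝ)
    (hKss : ¬ ∃ (S T : Finset V), S ⊆ X ∧ T ⊆ Y ∧ S.card = s ∧ T.card = s ∧
        ∀ u ∈ S, ∀ v ∈ T, G.Adj u v)
    (hp1 : 2 * ((s : ℝ) / Y.card) ^ ((1 : ℝ) / s) ≤ p) (hp2 : p ≤ 1) :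
    ((X.filter fun x => p * Y.card < ((Y.filter fun y => G.Adj x y).card : ℝ)).card : ℝ)
      ≤ 2 * s / p :=
  kst_bipartite_general G X Y s p hKss hp1
end

section
/- Let Δ ≥ 1 be a natural number and 0 < ε < 1/(Δ²+4). Let F be an n-vertex graph in which every vertex has degree at least 3Δεn, and all but at most εn vertices have degree at least (1−2ε)n. Then F contains every n-vertex graph J with maximum degree at most Δ as a spanning subgraph. -/
open SimpleGraph Finset

/-!
Let `B` be the set of vertices of `F` of degree below `(1 - 2ε)n`: `|B| ≤ εn`, and every vertex
outside `B` has at most `2εn - 1` non-neighbours. Choose `|B|` vertices of `J` with pairwise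
disjoint closed neighbourhoods, send them onto `B` and embed their neighbours greedily, which the
minimum degree `3Δεn` allows. In any bijection `φ : W ≃ V` extending this, every conflict (edge of
`J \ F.comap φ`) has a *safe* end: a vertex which, together with its neighbours, is mapped outside
`B`. A conflict at a safe vertex `v` is removed, creating no new conflict and keeping a safe end on
every conflict, by swapping `v` with a vertex `w` found by counting the unsuitable ones. For
`Δ = 2` this count does not suffice; then either some safe vertex has two conflicts and one of
them may stay, or `w` may be taken among all vertices, or a neighbour `x` of `v` is the only safe
end of another conflict, and `v` and `x` are swapped simultaneously with two partners.
-/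

namespace SpanningEmbedding

variable {V W : Type*} {F : SimpleGraph V} {J : SimpleGraph W} {B : Finset V}

theorem card_union_add_one_le {α : Type*} [DecidableEq α] {s t : Finset α} {a : α}
    (hs : a ∈ s) (ht : a ∈ t) : #(s ∪ t) + 1 ≤ #s + #t := by
  rw [← card_union_add_card_inter]
  exact Nat.add_le_add_left (card_pos.2 ⟨a, mem_inter.2 ⟨hs, ht⟩⟩) _

theorem exists_equiv_mem_iff [Fintype V] [Fintype W] [DecidableEq V] [DecidableEq W]
    (hcard : Fintype.card W = Fintype.card V) {S : Finset W} (h : #S = #B) :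
    ∃ φ : W ≃ V, ∀ p, φ p ∈ B ↔ p ∈ S := by
  have e : {p // p ∈ S} ≃ {z // z ∈ B} := Fintype.equivOfCardEq (by simpa using h)
  have f : {p // p ∉ S} ≃ {z // z ∉ B} := Fintype.equivOfCardEq (by
    rw [Fintype.card_subtype_compl, Fintype.card_subtype_compl]; simp [h, hcard])
  refine ⟨(Equiv.sumCompl (· ∈ S)).symm.trans ((e.sumCongr f).trans (Equiv.sumCompl (· ∈ B))),
    fun p => ?_⟩
  by_cases hp : p ∈ S
  · simp [Equiv.sumCompl_symm_apply_of_pos hp, hp]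
  · simpa [Equiv.sumCompl_symm_apply_of_neg hp, hp] using (f ⟨p, hp⟩).2

theorem adj_iff_of_degree_le_two [DecidableEq W] {v a b : W} [Fintype (J.neighborSet v)]
    (h : J.degree v ≤ 2) (ha : J.Adj v a) (hb : J.Adj v b) (hab : a ≠ b) (q : W) :
    J.Adj v q ↔ q = a ∨ q = b := by
  have hsub : {a, b} ⊆ J.neighborFinset v := by simp [insert_subset_iff, ha, hb]
  have := eq_of_subset_of_card_le hsub (by rw [card_pair hab]; simpa using h)
  rw [← mem_neighborFinset, ← this]
  simp

theorem card_comap_neighborFinset [Fintype V] [Fintype W] (G : SimpleGraph V)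
    [DecidableRel G.Adj] (φ : W ≃ V) (p : W) :
    #((G.comap φ).neighborFinset p) = G.degree (φ p) := by
  rw [card_neighborFinset_eq_degree, ← (Iso.comap φ G).degree_eq p]
  rfl

variable (J) in
def Safe (B : Finset V) (φ : W ≃ V) (p : W) : Prop :=
  φ p ∉ B ∧ ∀ q, J.Adj p q → φ q ∉ B

variable (F J) in
def SafeConflicts (B : Finset V) (φ : W ≃ V) : Prop :=
  ∀ p q, (J \ F.comap φ).Adj p q → Safe J B φ p ∨ Safe J B φ q

variable (F J) in
/-- `w` may take the place of `v`: after swapping the two, the edges from `v` to `R` and all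
edges at `w` are mapped to edges. -/
def IsSwapPartner (φ : W ≃ V) (v w : W) (R : Finset W) : Prop :=
  w ≠ v ∧ ¬J.Adj v w ∧ (∀ x ∈ R, F.Adj (φ w) (φ x)) ∧ ∀ y, J.Adj w y → F.Adj (φ v) (φ y)

theorem safe_iff_of_mem_iff {φ ψ : W ≃ V} (h : ∀ p, ψ p ∈ B ↔ φ p ∈ B) (p : W) :
    Safe J B ψ p ↔ Safe J B φ p := by
  simp only [Safe, h]

theorem Safe.of_eqOn {φ ψ : W ≃ V} {M : Set W} (heq : ∀ p ∉ M, ψ p = φ p) {r : W}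
    (hr : Safe J B φ r) (hrM : r ∉ M) (hM : ∀ q ∈ M, J.Adj r q → ψ q ∉ B) :
    Safe J B ψ r := by
  refine ⟨heq r hrM ▸ hr.1, fun q hq => ?_⟩
  by_cases hqM : q ∈ M
  · exact hM q hqM hq
  · exact heq q hqM ▸ hr.2 q hq

theorem SafeConflicts.of_le {φ ψ : W ≃ V} (hφ : SafeConflicts F J B φ)
    (hB : ∀ p, ψ p ∈ B ↔ φ p ∈ B) (hle : J \ F.comap ψ ≤ J \ F.comap φ) :
    SafeConflicts F J B ψ := fun p q hpq => by
  simpa only [safe_iff_of_mem_iff hB] using hφ p q (hle hpq)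

theorem sdiff_comap_le_of_eqOn {φ ψ : W ≃ V} (M : Set W) (heq : ∀ p ∉ M, ψ p = φ p)
    (hM : ∀ p ∈ M, ∀ q, (J \ F.comap ψ).Adj p q → (J \ F.comap φ).Adj p q) :
    J \ F.comap ψ ≤ J \ F.comap φ := by
  intro p q h
  by_cases hp : p ∈ M
  · exact hM p hp q h
  by_cases hq : q ∈ M
  · exact (hM q hq p h.symm).symm
  simpa [heq p hp, heq q hq] using h

theorem sdiff_comap_adj_of_eqOn {φ ψ : W ≃ V} {M : Set W} (heq : ∀ p ∉ M, ψ p = φ p)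
    (hM : ∀ p ∈ M, ∀ q, J.Adj p q → F.Adj (ψ p) (ψ q)) {p q : W}
    (h : (J \ F.comap ψ).Adj p q) : (J \ F.comap φ).Adj p q ∧ p ∉ M ∧ q ∉ M := by
  have hp : p ∉ M := fun hp => h.2 (hM p hp q h.1)
  have hq : q ∉ M := fun hq => h.2 (hM q hq p h.1.symm).symm
  exact ⟨by simpa [heq p hp, heq q hq] using h, hp, hq⟩

section Swap

variable [DecidableEq W] {φ : W ≃ V} {v w : W}

theorem swap_trans_mem_iff (hv : φ v ∉ B) (hw : φ w ∉ B) (p : W) :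
    (Equiv.swap v w).trans φ p ∈ B ↔ φ p ∈ B := by
  rw [Equiv.trans_apply, Equiv.swap_apply_def]
  split_ifs <;> simp_all

theorem sdiff_comap_swap_adj_left (hvw : ¬J.Adj v w) {q : W} :
    (J \ F.comap ((Equiv.swap v w).trans φ)).Adj v q ↔ J.Adj v q ∧ ¬F.Adj (φ w) (φ q) := by
  simp only [sdiff_adj, comap_adj, Equiv.trans_apply, Equiv.swap_apply_left]
  refine and_congr_right fun hq => ?_
  rw [Equiv.swap_apply_of_ne_of_ne (J.ne_of_adj hq).symm (by rintro rfl; exact hvw hq)]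

theorem sdiff_comap_swap_adj_right (hvw : ¬J.Adj v w) {q : W} :
    (J \ F.comap ((Equiv.swap v w).trans φ)).Adj w q ↔ J.Adj w q ∧ ¬F.Adj (φ v) (φ q) := by
  simp only [sdiff_adj, comap_adj, Equiv.trans_apply, Equiv.swap_apply_right]
  refine and_congr_right fun hq => ?_
  rw [Equiv.swap_apply_of_ne_of_ne (by rintro rfl; exact hvw hq.symm) (J.ne_of_adj hq).symm]

theorem IsSwapPartner.sdiff_comap_swap_le {R : Finset W} (hw : IsSwapPartner F J φ v w R)
    (hR : ∀ x, J.Adj v x → x ∉ R → ¬F.Adj (φ v) (φ x)) :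
    J \ F.comap ((Equiv.swap v w).trans φ) ≤ J \ F.comap φ := by
  refine sdiff_comap_le_of_eqOn {v, w} (fun p hp => ?_) fun p hp q hpq => ?_
  · simp only [Set.mem_insert_iff, Set.mem_singleton_iff, not_or] at hp
    simp [Equiv.swap_apply_of_ne_of_ne hp.1 hp.2]
  rcases hp with rfl | rfl
  · obtain ⟨hpq, hF⟩ := (sdiff_comap_swap_adj_left hw.2.1).1 hpq
    exact ⟨hpq, hR q hpq fun hqR => hF (hw.2.2.1 q hqR)⟩
  · obtain ⟨hpq, hF⟩ := (sdiff_comap_swap_adj_right hw.2.1).1 hpq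
    exact absurd (hw.2.2.2 q hpq) hF

theorem swap_trans_swap_trans_apply {x w' : W} (hvx : v ≠ x) (hvw' : v ≠ w') (hwx : w ≠ x)
    (hww' : w ≠ w') :
    (Equiv.swap x w').trans ((Equiv.swap v w).trans φ) v = φ w ∧
    (Equiv.swap x w').trans ((Equiv.swap v w).trans φ) x = φ w' ∧
    (Equiv.swap x w').trans ((Equiv.swap v w).trans φ) w = φ v ∧
    (Equiv.swap x w').trans ((Equiv.swap v w).trans φ) w' = φ x ∧
    ∀ p ∉ ({v, x, w, w'} : Set W), (Equiv.swap x w').trans ((Equiv.swap v w).trans φ) p = φ p := by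
  refine ⟨by simp [Equiv.swap_apply_of_ne_of_ne hvx hvw'],
    by simp [Equiv.swap_apply_of_ne_of_ne hvw'.symm hww'.symm],
    by simp [Equiv.swap_apply_of_ne_of_ne hwx hww'],
    by simp [Equiv.swap_apply_of_ne_of_ne hvx.symm hwx.symm], fun p hp => ?_⟩
  simp only [Set.mem_insert_iff, Set.mem_singleton_iff, not_or] at hp
  simp [Equiv.swap_apply_of_ne_of_ne, hp]

theorem adj_double_swap {v v₁ x y w w' : W} (hNv : ∀ q, J.Adj v q ↔ q = v₁ ∨ q = x)
    (hNx : ∀ q, J.Adj x q ↔ q = v ∨ q = y) (hxv₁ : x ≠ v₁) (hyv : y ≠ v)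
    (hvx : F.Adj (φ v) (φ x)) (hw : IsSwapPartner F J φ v w {v₁})
    (hw' : IsSwapPartner F J φ x w' {y}) (hww' : F.Adj (φ w') (φ w)) (hwy : w ≠ y)
    (hw'v₁ : w' ≠ v₁) :
    ∀ p ∈ ({v, x, w, w'} : Set W), ∀ q, J.Adj p q →
      F.Adj ((Equiv.swap x w').trans ((Equiv.swap v w).trans φ) p)
        ((Equiv.swap x w').trans ((Equiv.swap v w).trans φ) q) := by
  obtain ⟨hwv, hvw, hwv₁, hwN⟩ := hw
  obtain ⟨hw'x, hxw', hw'y, hw'N⟩ := hw'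
  have hxw : ¬J.Adj x w := by rw [hNx]; tauto
  have hvw' : ¬J.Adj v w' := by rw [hNv]; tauto
  have hvx₀ : v ≠ x := by rintro rfl; exact F.irrefl hvx
  have hw'v : w' ≠ v := by rintro rfl; exact hxw' ((hNx _).2 (Or.inl rfl))
  have hwx : w ≠ x := by rintro rfl; exact hvw ((hNv _).2 (Or.inr rfl))
  have hww'₀ : w ≠ w' := by rintro rfl; exact F.irrefl hww'
  obtain ⟨hψv, hψx, hψw, hψw', hψ⟩ := swap_trans_swap_trans_apply (φ := φ) hvx₀ hw'v.symm hwx hww'₀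
  have hnotM : ∀ q, q ≠ v → q ≠ x → q ≠ w → q ≠ w' → q ∉ ({v, x, w, w'} : Set W) := by
    simp +contextual
  rintro p (rfl | rfl | rfl | rfl) q hpq
  · rcases (hNv q).1 hpq with rfl | rfl
    · rw [hψv, hψ q (hnotM q (J.ne_of_adj hpq).symm hxv₁.symm (by rintro rfl; exact hvw hpq)
        (by rintro rfl; exact hvw' hpq))]
      exact hwv₁ q (mem_singleton_self q)
    · rw [hψv, hψx]; exact hww'.symm
  · rcases (hNx q).1 hpq with rfl | rfl
    · rw [hψx, hψv]; exact hww'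
    · rw [hψx, hψ q (hnotM q hyv (J.ne_of_adj hpq).symm (Ne.symm hwy)
        (by rintro rfl; exact hxw' hpq))]
      exact hw'y q (mem_singleton_self q)
  · by_cases hqw' : q = w'
    · subst hqw'; rw [hψw, hψw']; exact hvx
    rw [hψw, hψ q (hnotM q (by rintro rfl; exact hvw hpq.symm) (by rintro rfl; exact hxw hpq.symm)
      (J.ne_of_adj hpq).symm hqw')]
    exact hwN q hpq
  · by_cases hqw : q = w
    · subst hqw; rw [hψw', hψw]; exact hvx.symm
    rw [hψw', hψ q (hnotM q (by rintro rfl; exact hvw' hpq.symm)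
      (by rintro rfl; exact hxw' hpq.symm) hqw (J.ne_of_adj hpq).symm)]
    exact hw'N q hpq

end Swap

section Swapping

variable [Fintype V] [Fintype W] [DecidableEq V] [DecidableEq W] [DecidableRel F.Adj]
  [DecidableRel J.Adj] {Δ d : ℕ}

/-- Each summand of `hcount` bounds one kind of unsuitable vertex; `v` is unsuitable for three
reasons at once because of its conflict with `v₁`, whence the `+ 2`. -/
theorem exists_swap_partner (hJ : ∀ p, J.degree p ≤ Δ) (hd : ∀ z ∉ B, Fᶜ.degree z ≤ d)
    {φ : W ≃ V} {v v₁ : W} (hvv₁ : (J \ F.comap φ).Adj v v₁) (hv : φ v ∉ B)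
    {R : Finset W} (hRv : R ⊆ J.neighborFinset v) (hv₁R : v₁ ∈ R) (hR : ∀ x ∈ R, φ x ∉ B)
    (base A : Finset W) (hcount : #A + (1 + Δ) + #R * d + Δ * d < #base + 2) :
    ∃ w ∈ base, w ∉ A ∧ IsSwapPartner F J φ v w R := by
  set X : W → Finset W := fun p => (Fᶜ.comap φ).neighborFinset p
  have hX : ∀ p q, q ∈ X p ↔ q ≠ p ∧ ¬F.Adj (φ p) (φ q) := fun p q => by
    simp [X, φ.injective.ne_iff, eq_comm]
  set P := insert v (J.neighborFinset v)
  set Q := R.biUnion X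
  set E := (X v).biUnion fun y => J.neighborFinset y
  have hvP : v ∈ P := mem_insert_self _ _
  have hvQ : v ∈ Q := mem_biUnion.2 ⟨v₁, hv₁R, (hX _ _).2
    ⟨(J.ne_of_adj hvv₁.1), fun h => hvv₁.2 h.symm⟩⟩
  have hvE : v ∈ E := mem_biUnion.2 ⟨v₁, (hX _ _).2 ⟨(J.ne_of_adj hvv₁.1).symm, hvv₁.2⟩,
    (mem_neighborFinset _ _ _).2 hvv₁.1.symm⟩
  have hP : #P ≤ 1 + Δ := (card_insert_le _ _).trans (by rw [add_comm]; simpa using hJ v)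
  have hQ : #Q ≤ #R * d := card_biUnion_le_card_mul _ _ _ fun x hx => by
    rw [card_comap_neighborFinset]; exact hd _ (hR x hx)
  have hE : #E ≤ Δ * d := (card_biUnion_le_card_mul _ _ Δ fun y _ => by simpa using hJ y).trans
    (by rw [mul_comm, card_comap_neighborFinset]; exact Nat.mul_le_mul_left _ (hd _ hv))
  have hU : #(A ∪ (P ∪ Q ∪ E)) < #base := by
    have h1 := card_union_add_one_le hvP hvQ
    have h2 := card_union_add_one_le (mem_union_left Q hvP) hvE
    have h3 := card_union_le A (P ∪ Q ∪ E)
    omega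
  obtain ⟨w, hw, hwU⟩ := exists_mem_notMem_of_card_lt_card hU
  simp only [P, Q, E, mem_union, mem_insert, mem_biUnion, mem_neighborFinset, not_or,
    not_exists, not_and] at hwU
  obtain ⟨hwA, ⟨⟨hwv, hvw⟩, hwQ⟩, hwE⟩ := hwU
  refine ⟨w, hw, hwA, hwv, hvw, fun x hx => ?_, fun y hwy => ?_⟩
  · have hwx : w ≠ x := by rintro rfl; exact hvw (by simpa using hRv hx)
    by_contra h
    exact hwQ x hx ((hX _ _).2 ⟨hwx, fun h' => h h'.symm⟩)
  · by_contra h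
    exact hwE y ((hX _ _).2 ⟨by rintro rfl; exact hvw hwy.symm, h⟩) hwy.symm

theorem exists_fewer_conflicts_of_safe_swap (hJ : ∀ p, J.degree p ≤ Δ)
    (hd : ∀ z ∉ B, Fᶜ.degree z ≤ d) {φ : W ≃ V} (hφ : SafeConflicts F J B φ) {v v₁ : W}
    (hvv₁ : (J \ F.comap φ).Adj v v₁) (hv : Safe J B φ v) {R : Finset W}
    (hRv : R ⊆ J.neighborFinset v) (hv₁R : v₁ ∈ R)
    (hR : ∀ x, J.Adj v x → x ∉ R → ¬F.Adj (φ v) (φ x))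
    (hcount : #B + (1 + Δ) + #R * d + Δ * d < Fintype.card W + 2) :
    ∃ ψ : W ≃ V, SafeConflicts F J B ψ ∧ J \ F.comap ψ < J \ F.comap φ := by
  obtain ⟨w, -, hwB, hw⟩ := exists_swap_partner hJ hd hvv₁ hv.1 hRv hv₁R
    (fun x hx => hv.2 x (by simpa using hRv hx)) univ (B.map φ.symm.toEmbedding)
    (by simpa using hcount)
  replace hwB : φ w ∉ B := by simpa using hwB
  have hle := hw.sdiff_comap_swap_le hR
  refine ⟨_, hφ.of_le (swap_trans_mem_iff hv.1 hwB) hle, lt_of_le_not_ge hle fun h => ?_⟩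
  exact ((sdiff_comap_swap_adj_left hw.2.1).1 (h hvv₁)).2 (hw.2.2.1 v₁ hv₁R)

theorem exists_fewer_conflicts_of_free_swap (hJ : ∀ p, J.degree p ≤ Δ)
    (hd : ∀ z ∉ B, Fᶜ.degree z ≤ d) {φ : W ≃ V} {v v₁ : W} (hvv₁ : (J \ F.comap φ).Adj v v₁)
    (hv : Safe J B φ v)
    (hfar : ∀ p q, (J \ F.comap φ).Adj p q → s(p, q) ≠ s(v, v₁) →
      ∃ r, (r = p ∨ r = q) ∧ Safe J B φ r ∧ r ≠ v ∧ ¬J.Adj v r)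
    (hcount : 1 + Δ + Δ * d + Δ * d < Fintype.card W + 2) :
    ∃ ψ : W ≃ V, SafeConflicts F J B ψ ∧ J \ F.comap ψ < J \ F.comap φ := by
  have hN : #(J.neighborFinset v) * d ≤ Δ * d := Nat.mul_le_mul_right _ (by simpa using hJ v)
  obtain ⟨w, -, -, -, hvw, hwR, hwN⟩ := exists_swap_partner hJ hd hvv₁ hv.1 subset_rfl
    (by simpa using hvv₁.1) (fun x hx => hv.2 x (by simpa using hx)) univ ∅
    (by simp only [card_empty, card_univ]; omega)
  set ψ := (Equiv.swap v w).trans φ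
  have hM : ∀ p ∈ ({v, w} : Set W), ∀ q, J.Adj p q → F.Adj (ψ p) (ψ q) := by
    rintro p (rfl | rfl) q hpq
    · by_contra h
      exact ((sdiff_comap_swap_adj_left hvw).1 ⟨hpq, h⟩).2 (hwR q (by simpa using hpq))
    · by_contra h
      exact ((sdiff_comap_swap_adj_right hvw).1 ⟨hpq, h⟩).2 (hwN q hpq)
  have heq : ∀ p ∉ ({v, w} : Set W), ψ p = φ p := fun p hp => by
    simp only [Set.mem_insert_iff, Set.mem_singleton_iff, not_or] at hp
    simp [ψ, Equiv.swap_apply_of_ne_of_ne hp.1 hp.2]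
  refine ⟨ψ, fun p q hpq => ?_, lt_of_le_not_ge (fun p q h => (sdiff_comap_adj_of_eqOn heq hM h).1)
    fun h => (sdiff_comap_adj_of_eqOn heq hM (h hvv₁)).2.1 (by simp)⟩
  obtain ⟨hpq, hp, hq⟩ := sdiff_comap_adj_of_eqOn heq hM hpq
  obtain ⟨r, hr, hrs, hrv, hvr⟩ := hfar p q hpq (by simp_all)
  have hrM : r ∉ ({v, w} : Set W) := by rcases hr with rfl | rfl <;> assumption
  have hsafe : Safe J B ψ r := hrs.of_eqOn heq hrM fun q hq hrq => by
    rcases hq with rfl | rfl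
    · exact absurd hrq.symm hvr
    · simpa [ψ] using hv.1
  rcases hr with rfl | rfl
  exacts [Or.inl hsafe, Or.inr hsafe]

theorem exists_double_swap_partners (hJ : ∀ p, J.degree p ≤ 2)
    (hd : ∀ z ∉ B, Fᶜ.degree z ≤ d) (hcard : Fintype.card W = Fintype.card V) {φ : W ≃ V}
    {v v₁ x y : W} (hvv₁ : (J \ F.comap φ).Adj v v₁) (hv : Safe J B φ v)
    (hxy : (J \ F.comap φ).Adj x y) (hx : Safe J B φ x)
    (hcount : #B + 3 * d + 2 < Fintype.card W) (hcount' : 4 * d + 4 < Fintype.card W) :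
    ∃ w w', IsSwapPartner F J φ v w {v₁} ∧ IsSwapPartner F J φ x w' {y} ∧
      F.Adj (φ w') (φ w) ∧ w ≠ y ∧ w' ≠ v₁ ∧ φ w' ∉ B := by
  obtain ⟨w', -, hw'A, hw'⟩ := exists_swap_partner hJ hd hxy hx.1 (R := {y})
    (by simpa using hxy.1) (mem_singleton_self y) (by simpa using hx.2 y hxy.1) univ
    (insert v₁ (B.map φ.symm.toEmbedding))
    (by have := card_insert_le v₁ (B.map φ.symm.toEmbedding)
        simp only [card_map] at this
        simp only [card_singleton, card_univ]; omega)
  simp only [mem_insert, mem_map_equiv, Equiv.symm_symm, not_or] at hw'A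
  have hdeg : Fintype.card W ≤ F.degree (φ w') + d + 1 := by
    have := F.degree_lt_card_verts (φ w')
    have := F.degree_compl (v := φ w')
    have := hd _ hw'A.2
    omega
  obtain ⟨w, hww', hwA, hw⟩ := exists_swap_partner hJ hd hvv₁ hv.1 (R := {v₁})
    (by simpa using hvv₁.1) (mem_singleton_self v₁) (by simpa using hv.2 v₁ hvv₁.1)
    ((F.comap φ).neighborFinset w') {y, w'}
    (by rw [card_comap_neighborFinset, card_singleton]
        have := card_le_two (a := y) (b := w'); omega)
  simp only [mem_neighborFinset, comap_adj] at hww'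
  simp only [mem_insert, mem_singleton, not_or] at hwA
  exact ⟨w, w', hw, hw', hww', hwA.1, hw'A⟩

theorem exists_fewer_conflicts_of_double_swap (hJ : ∀ p, J.degree p ≤ 2)
    (hd : ∀ z ∉ B, Fᶜ.degree z ≤ d) (hcard : Fintype.card W = Fintype.card V)
    {φ : W ≃ V} (hφ : SafeConflicts F J B φ) {v v₁ x y : W} (hvv₁ : (J \ F.comap φ).Adj v v₁)
    (hv : Safe J B φ v) (hvx : J.Adj v x) (hxv₁ : x ≠ v₁) (hxy : (J \ F.comap φ).Adj x y)
    (hx : Safe J B φ x) (hyv : y ≠ v)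
    (hsingle : ∀ p q q', Safe J B φ p → (J \ F.comap φ).Adj p q →
      (J \ F.comap φ).Adj p q' → q = q')
    (hcount : #B + 3 * d + 2 < Fintype.card W) (hcount' : 4 * d + 4 < Fintype.card W) :
    ∃ ψ : W ≃ V, SafeConflicts F J B ψ ∧ J \ F.comap ψ < J \ F.comap φ := by
  obtain ⟨w, w', hw, hw', hww', hwy, hw'v₁, hw'B⟩ :=
    exists_double_swap_partners hJ hd hcard hvv₁ hv hxy hx hcount hcount'
  have hNv := adj_iff_of_degree_le_two (hJ v) hvv₁.1 hvx hxv₁.symm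
  have hNx := adj_iff_of_degree_le_two (hJ x) hvx.symm hxy.1 hyv.symm
  have hvx' : F.Adj (φ v) (φ x) := by
    by_contra h
    exact hxv₁ (hsingle v x v₁ hv ⟨hvx, h⟩ hvv₁)
  have hM := adj_double_swap hNv hNx hxv₁ hyv hvx' hw hw' hww' hwy hw'v₁
  obtain ⟨-, hψx, hψw, hψw', heq⟩ := swap_trans_swap_trans_apply (φ := φ) (v := v) (w := w)
    (x := x) (w' := w') (J.ne_of_adj hvx) (by rintro rfl; exact hw'.2.1 hvx.symm)
    (by rintro rfl; exact hw.2.1 hvx) (by rintro rfl; exact F.irrefl hww')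
  -- `v` may land in `B`, but the safe end of a remaining conflict is not next to `v`
  have hsafe : ∀ r s, (J \ F.comap φ).Adj r s → r ∉ ({v, x, w, w'} : Set W) →
      s ∉ ({v, x, w, w'} : Set W) → Safe J B φ r →
      Safe J B ((Equiv.swap x w').trans ((Equiv.swap v w).trans φ)) r := by
    intro r s hrs hrM hsM hr
    have hrv : ¬J.Adj r v := by
      intro hrv
      rcases (hNv r).1 hrv.symm with rfl | rfl
      · exact hsM (hsingle r v s hr hvv₁.symm hrs ▸ by simp)
      · exact hrM (by simp)
    refine hr.of_eqOn heq hrM fun q hq hrq => ?_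
    rcases hq with rfl | rfl | rfl | rfl
    · exact absurd hrq hrv
    · rw [hψx]; exact hw'B
    · rw [hψw]; exact hv.1
    · rw [hψw']; exact hx.1
  refine ⟨_, fun p q hpq => ?_, lt_of_le_not_ge (fun p q h => (sdiff_comap_adj_of_eqOn heq hM h).1)
    fun h => (sdiff_comap_adj_of_eqOn heq hM (h hvv₁)).2.1 (by simp)⟩
  obtain ⟨hpq, hp, hq⟩ := sdiff_comap_adj_of_eqOn heq hM hpq
  exact (hφ p q hpq).imp (hsafe p q hpq hp hq) (hsafe q p hpq.symm hq hp)

theorem exists_fewer_conflicts_of_unique_conflict (hJ : ∀ p, J.degree p ≤ 2)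
    (hd : ∀ z ∉ B, Fᶜ.degree z ≤ d) (hcard : Fintype.card W = Fintype.card V)
    {φ : W ≃ V} (hφ : SafeConflicts F J B φ) {v v₁ : W} (hvv₁ : (J \ F.comap φ).Adj v v₁)
    (hv : Safe J B φ v)
    (hsingle : ∀ p q q', Safe J B φ p → (J \ F.comap φ).Adj p q →
      (J \ F.comap φ).Adj p q' → q = q')
    (hcount : #B + 3 * d + 2 < Fintype.card W) (hcount' : 4 * d + 4 < Fintype.card W) :
    ∃ ψ : W ≃ V, SafeConflicts F J B ψ ∧ J \ F.comap ψ < J \ F.comap φ := by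
  by_cases hfar : ∀ p q, (J \ F.comap φ).Adj p q → s(p, q) ≠ s(v, v₁) →
      ∃ r, (r = p ∨ r = q) ∧ Safe J B φ r ∧ r ≠ v ∧ ¬J.Adj v r
  · exact exists_fewer_conflicts_of_free_swap hJ hd hvv₁ hv hfar (by omega)
  push Not at hfar
  obtain ⟨p, q, hpq, hne, hnear⟩ := hfar
  obtain ⟨x, y, hxy, hne, hx, hvx⟩ : ∃ x y, (J \ F.comap φ).Adj x y ∧ s(x, y) ≠ s(v, v₁) ∧
      Safe J B φ x ∧ (x ≠ v → J.Adj v x) := by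
    rcases hφ p q hpq with h | h
    · exact ⟨p, q, hpq, hne, h, hnear p (Or.inl rfl) h⟩
    · exact ⟨q, p, hpq.symm, by rwa [Sym2.eq_swap], h, hnear q (Or.inr rfl) h⟩
  have hxv : x ≠ v := by
    rintro rfl
    exact hne (by rw [hsingle x y v₁ hx hxy hvv₁])
  have hxv₁ : x ≠ v₁ := by
    rintro rfl
    exact hne (by rw [hsingle x y v hx hxy hvv₁.symm, Sym2.eq_swap])
  have hyv : y ≠ v := by
    rintro rfl
    exact hxv₁ (hsingle y x v₁ hv hxy.symm hvv₁)
  exact exists_fewer_conflicts_of_double_swap hJ hd hcard hφ hvv₁ hv (hvx hxv) hxv₁ hxy hx hyv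
    hsingle hcount hcount'

theorem exists_fewer_conflicts_of_degree_le_two (hJ : ∀ p, J.degree p ≤ 2)
    (hd : ∀ z ∉ B, Fᶜ.degree z ≤ d) (hcard : Fintype.card W = Fintype.card V)
    {φ : W ≃ V} (hφ : SafeConflicts F J B φ) {v v₁ : W} (hvv₁ : (J \ F.comap φ).Adj v v₁)
    (hv : Safe J B φ v)
    (hcount : #B + 3 * d + 2 < Fintype.card W) (hcount' : 4 * d + 4 < Fintype.card W) :
    ∃ ψ : W ≃ V, SafeConflicts F J B ψ ∧ J \ F.comap ψ < J \ F.comap φ := by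
  by_cases htwo : ∃ p q q', Safe J B φ p ∧ (J \ F.comap φ).Adj p q ∧
      (J \ F.comap φ).Adj p q' ∧ q ≠ q'
  · obtain ⟨p, q, q', hp, hpq, hpq', hqq'⟩ := htwo
    have hR : #((J.neighborFinset p).erase q') ≤ 1 := by
      rw [card_erase_of_mem (by simpa using hpq'.1), card_neighborFinset_eq_degree]
      have := hJ p; omega
    refine exists_fewer_conflicts_of_safe_swap hJ hd hφ hpq hp (erase_subset _ _)
      (mem_erase.2 ⟨hqq', by simpa using hpq.1⟩) (fun x hx hxR => ?_) ?_
    · obtain rfl : x = q' := by by_contra h; exact hxR (mem_erase.2 ⟨h, by simpa using hx⟩)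
      exact hpq'.2
    · have := Nat.mul_le_mul_right d hR; omega
  push Not at htwo
  exact exists_fewer_conflicts_of_unique_conflict hJ hd hcard hφ hvv₁ hv htwo hcount hcount'

theorem exists_fewer_conflicts (hJ : ∀ p, J.degree p ≤ Δ) (hd : ∀ z ∉ B, Fᶜ.degree z ≤ d)
    (hcard : Fintype.card W = Fintype.card V) {β : ℝ} (hB : (#B : ℝ) ≤ β)
    (hdβ : (d : ℝ) + 1 ≤ 2 * β) (hn : ((Δ : ℝ) ^ 2 + 4) * β < Fintype.card W)
    {φ : W ≃ V} (hφ : SafeConflicts F J B φ) (hne : J \ F.comap φ ≠ ⊥) :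
    ∃ ψ : W ≃ V, SafeConflicts F J B ψ ∧ J \ F.comap ψ < J \ F.comap φ := by
  obtain ⟨a, b, hab⟩ := ne_bot_iff_exists_adj.1 hne
  obtain ⟨v, v₁, hvv₁, hv⟩ : ∃ v v₁, (J \ F.comap φ).Adj v v₁ ∧ Safe J B φ v :=
    (hφ a b hab).elim (⟨a, b, hab, ·⟩) (⟨b, a, hab.symm, ·⟩)
  have hΔ : 1 ≤ Δ := (J.degree_pos_iff_exists_adj v).2 ⟨v₁, hvv₁.1⟩ |>.trans_le (hJ v)
  have hβ : 0 ≤ β := (Nat.cast_nonneg _).trans hB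
  rcases eq_or_ne Δ 2 with rfl | hΔ2
  · refine exists_fewer_conflicts_of_degree_le_two hJ hd hcard hφ hvv₁ hv ?_ ?_
    · have : (#B : ℝ) + 3 * d + 2 < Fintype.card W := by push_cast at hn; linarith
      exact_mod_cast this
    · have : 4 * (d : ℝ) + 4 < Fintype.card W := by push_cast at hn; linarith
      exact_mod_cast this
  · refine exists_fewer_conflicts_of_safe_swap hJ hd hφ hvv₁ hv subset_rfl (by simpa using hvv₁.1)
      (fun x hx hxR => absurd (by simpa using hx) hxR) ?_
    have hN : #(J.neighborFinset v) * d ≤ Δ * d := Nat.mul_le_mul_right _ (by simpa using hJ v)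
    suffices (#B : ℝ) + (1 + Δ) + Δ * d + Δ * d < Fintype.card W + 2 by
      have : #B + (1 + Δ) + Δ * d + Δ * d < Fintype.card W + 2 := by exact_mod_cast this
      omega
    have hΔR : (1 : ℝ) ≤ Δ := by exact_mod_cast hΔ
    have hdΔ : (Δ : ℝ) * (d + 1) ≤ Δ * (2 * β) := mul_le_mul_of_nonneg_left hdβ (by positivity)
    rcases Nat.lt_or_gt_of_ne hΔ2 with h | h
    · obtain rfl : Δ = 1 := by omega
      push_cast at hn hdΔ ⊢; linarith
    · have h3 : (3 : ℝ) ≤ Δ := by exact_mod_cast h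
      -- the slack is `(Δ - 1) (Δ - 3) β + Δ + 1`, which can be negative for `Δ = 2`
      nlinarith [mul_nonneg (mul_nonneg (sub_nonneg.2 hΔR) (sub_nonneg.2 h3)) hβ]

end Swapping

theorem exists_le_comap [Finite W] {φ₀ : W ≃ V} (h₀ : SafeConflicts F J B φ₀)
    (step : ∀ φ, SafeConflicts F J B φ → J \ F.comap φ ≠ ⊥ →
      ∃ ψ, SafeConflicts F J B ψ ∧ J \ F.comap ψ < J \ F.comap φ) :
    ∃ φ : W ≃ V, J ≤ F.comap φ := by
  induction hG : J \ F.comap φ₀ using WellFoundedLT.induction generalizing φ₀ with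
  | _ G ih =>
    by_cases hbot : J \ F.comap φ₀ = ⊥
    · exact ⟨φ₀, sdiff_eq_bot_iff.1 hbot⟩
    obtain ⟨ψ, hψ, hlt⟩ := step φ₀ h₀ hbot
    exact ih _ (hG ▸ hlt) hψ rfl

section Packing

variable [Fintype W] [DecidableEq W] [DecidableRel J.Adj] {Δ : ℕ}

variable (J) in
def IsTwoPacking (S : Finset W) : Prop :=
  (S : Set W).Pairwise fun s t =>
    Disjoint (insert s (J.neighborFinset s)) (insert t (J.neighborFinset t))

theorem IsTwoPacking.eq_of_mem {S : Finset W} (hS : IsTwoPacking J S) {s t u : W} (hs : s ∈ S)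
    (ht : t ∈ S) (hsu : u ∈ insert s (J.neighborFinset s))
    (htu : u ∈ insert t (J.neighborFinset t)) : s = t := by
  by_contra hst
  exact disjoint_left.1 (hS hs ht hst) hsu htu

theorem IsTwoPacking.disjoint_biUnion {S : Finset W} (hS : IsTwoPacking J S) :
    Disjoint (S.biUnion fun s => J.neighborFinset s) S := by
  refine disjoint_left.2 fun u hu huS => ?_
  obtain ⟨s, hs, hsu⟩ := mem_biUnion.1 hu
  obtain rfl := hS.eq_of_mem hs huS (mem_insert_of_mem hsu) (mem_insert_self u _)
  simp at hsu

theorem exists_isTwoPacking (hJ : ∀ p, J.degree p ≤ Δ) (k : ℕ)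
    (hk : k * (Δ ^ 2 + 1) < Fintype.card W) : ∃ S : Finset W, #S = k ∧ IsTwoPacking J S := by
  induction k with
  | zero => exact ⟨∅, rfl, by simp [IsTwoPacking]⟩
  | succ k ih =>
    have hk' := lt_of_le_of_lt (Nat.mul_le_mul_right _ k.le_succ) hk
    obtain ⟨S, hSk, hS⟩ := ih hk'
    -- `ball t` contains every vertex at distance at most two from `t`
    set ball : W → Finset W := fun t =>
      insert t ((J.neighborFinset t).biUnion fun u => insert u ((J.neighborFinset u).erase t))
    have hball : ∀ t, #(ball t) ≤ Δ ^ 2 + 1 := fun t => by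
      refine (card_insert_le _ _).trans (Nat.succ_le_succ ?_)
      rw [sq]
      refine (card_biUnion_le_card_mul _ _ Δ fun u hu => ?_).trans
        (Nat.mul_le_mul_right _ (by simpa using hJ t))
      have htu : t ∈ J.neighborFinset u := by simpa [adj_comm] using hu
      refine (card_insert_le _ _).trans ?_
      rw [card_erase_of_mem htu, card_neighborFinset_eq_degree]
      have := hJ u
      have := (J.degree_pos_iff_exists_adj u).2 ⟨t, by simpa [adj_comm] using hu⟩
      omega
    obtain ⟨w, -, hw⟩ := exists_mem_notMem_of_card_lt_card (s := S.biUnion ball) (t := univ)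
      ((card_biUnion_le_card_mul _ _ _ fun t _ => hball t).trans_lt (by simpa [hSk] using hk'))
    simp only [mem_biUnion, not_exists, not_and] at hw
    have hfar : ∀ t ∈ S, w ≠ t ∧ ¬J.Adj t w ∧ ∀ u, J.Adj t u → ¬J.Adj u w := fun t ht => by
      have := hw t ht
      simp only [ball, mem_insert, mem_biUnion, mem_erase, mem_neighborFinset, not_or,
        not_exists, not_and] at this
      exact ⟨this.1, fun h => (this.2 w h).1 rfl, fun u hu h => (this.2 u hu).2 this.1 h⟩
    have hdisj : ∀ t ∈ S, Disjoint (insert w (J.neighborFinset w))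
        (insert t (J.neighborFinset t)) := fun t ht => by
      obtain ⟨hwt, htw, hcommon⟩ := hfar t ht
      rw [Finset.disjoint_left]
      simp only [mem_insert, mem_neighborFinset]
      rintro z (rfl | hwz) (rfl | htz)
      exacts [hwt rfl, htw htz, htw hwz.symm, hcommon z htz hwz.symm]
    refine ⟨insert w S, ?_, ?_⟩
    · rw [card_insert_of_notMem fun hwS => (hfar w hwS).1 rfl, hSk]
    · rw [IsTwoPacking, coe_insert, Set.pairwise_insert]
      exact ⟨hS, fun t ht _ => ⟨hdisj t ht, (hdisj t ht).symm⟩⟩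

end Packing

section Greedy

variable [Fintype V] [Fintype W] [DecidableEq V] [DecidableEq W] [DecidableRel F.Adj]
  [DecidableRel J.Adj] {Δ d : ℕ}

theorem exists_equiv_adj_on_insert (hd : ∀ z ∉ B, Fᶜ.degree z ≤ d) {S L : Finset W}
    (hLS : Disjoint L S) {u s₀ : W} (huS : u ∉ S) (huL : u ∉ L)
    (huniq : ∀ s ∈ S, J.Adj s u → s = s₀) {φ : W ≃ V} (hφB : ∀ p, φ p ∈ B ↔ p ∈ S)
    (hφ : ∀ p ∈ S ∪ L, ∀ q ∈ S ∪ L, J.Adj p q → F.Adj (φ p) (φ q))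
    (hcount : #S + #L + #(L.filter (J.Adj u)) * d < F.degree (φ s₀)) :
    ∃ ψ : W ≃ V, (∀ p, ψ p ∈ B ↔ p ∈ S) ∧
      ∀ p ∈ S ∪ insert u L, ∀ q ∈ S ∪ insert u L, J.Adj p q → F.Adj (ψ p) (ψ q) := by
  set X : W → Finset W := fun p => (Fᶜ.comap φ).neighborFinset p
  have hA : #(S ∪ L ∪ (L.filter (J.Adj u)).biUnion X) <
      #((F.comap φ).neighborFinset s₀) := by
    rw [card_comap_neighborFinset]
    refine lt_of_le_of_lt ((card_union_le _ _).trans (add_le_add (card_union_le _ _)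
      (card_biUnion_le_card_mul _ _ _ fun q hq => ?_))) hcount
    rw [card_comap_neighborFinset]
    exact hd _ fun h => disjoint_left.1 hLS (mem_filter.1 hq).1 ((hφB q).1 h)
  obtain ⟨w, hws₀, hwA⟩ := exists_mem_notMem_of_card_lt_card hA
  simp only [mem_neighborFinset, comap_adj] at hws₀
  simp only [mem_union, mem_biUnion, mem_filter, not_or, not_exists, not_and] at hwA
  obtain ⟨⟨hwS, hwL⟩, hwX⟩ := hwA
  have hwu : ∀ q ∈ S ∪ L, J.Adj u q → F.Adj (φ w) (φ q) := by
    intro q hq huq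
    rcases mem_union.1 hq with hqS | hqL
    · rw [huniq q hqS huq.symm]; exact hws₀.symm
    · by_contra h
      refine hwX q ⟨hqL, huq⟩ ?_
      simp only [X, mem_neighborFinset, comap_adj, compl_adj]
      exact ⟨φ.injective.ne fun hqw => hwL (hqw ▸ hqL), fun h' => h h'.symm⟩
  set ψ := (Equiv.swap u w).trans φ
  have hψ : ∀ p ∈ S ∪ L, ψ p = φ p := fun p hp => by
    have hpu : p ≠ u := by rintro rfl; simp_all
    have hpw : p ≠ w := by rintro rfl; simp_all
    simp [ψ, Equiv.swap_apply_of_ne_of_ne hpu hpw]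
  have hψu : ψ u = φ w := by simp [ψ]
  refine ⟨ψ, fun p => (swap_trans_mem_iff (by rwa [hφB]) (by rwa [hφB]) p).trans (hφB p),
    ?_⟩
  have hmem : ∀ p ∈ S ∪ insert u L, p ≠ u → p ∈ S ∪ L := fun p hp hpu => by
    simp only [mem_union, mem_insert] at hp ⊢; tauto
  intro p hp q hq hpq
  by_cases hpu : p = u
  · subst hpu
    have hq' := hmem q hq (J.ne_of_adj hpq).symm
    rw [hψu, hψ q hq']; exact hwu q hq' hpq
  by_cases hqu : q = u
  · subst hqu
    have hp' := hmem p hp hpu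
    rw [hψu, hψ p hp']; exact (hwu p hp' hpq.symm).symm
  rw [hψ p (hmem p hp hpu), hψ q (hmem q hq hqu)]
  exact hφ p (hmem p hp hpu) q (hmem q hq hqu) hpq

theorem exists_equiv_adj_on_nbhd (hJ : ∀ p, J.degree p ≤ Δ)
    (hd : ∀ z ∉ B, Fᶜ.degree z ≤ d) (hcard : Fintype.card W = Fintype.card V) {S : Finset W}
    (hS : IsTwoPacking J S) (hSB : #S = #B) {β : ℝ} (hB : (#B : ℝ) ≤ β)
    (hdβ : (d : ℝ) + 1 ≤ 2 * β) (hmin : ∀ z, 3 * Δ * β ≤ F.degree z) :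
    ∃ φ : W ≃ V, (∀ p, φ p ∈ B ↔ p ∈ S) ∧
      ∀ p ∈ S ∪ S.biUnion (fun s => J.neighborFinset s),
      ∀ q ∈ S ∪ S.biUnion (fun s => J.neighborFinset s), J.Adj p q → F.Adj (φ p) (φ q) := by
  refine Finset.induction_on' (S.biUnion fun s => J.neighborFinset s) ?_ ?_
  · obtain ⟨φ, hφ⟩ := exists_equiv_mem_iff hcard hSB
    refine ⟨φ, hφ, fun p hp q hq hpq => ?_⟩
    simp only [union_empty] at hp hq
    obtain rfl := hS.eq_of_mem hp hq (mem_insert_of_mem (by simpa using hpq)) (mem_insert_self q _)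
    exact absurd hpq J.irrefl
  rintro u L hu hL huL ⟨φ, hφB, hφ⟩
  obtain ⟨s₀, hs₀, hs₀u⟩ := mem_biUnion.1 hu
  have hLS := disjoint_of_subset_left hL hS.disjoint_biUnion
  refine exists_equiv_adj_on_insert hd hLS (disjoint_left.1 hS.disjoint_biUnion hu) huL
    (fun s hs hsu => hS.eq_of_mem hs hs₀ (by simp [hsu]) (mem_insert_of_mem hs₀u)) hφB hφ ?_
  have hL : #L + 1 ≤ Δ * #S := by
    have := card_le_card (insert_subset hu hL)
    rw [card_insert_of_notMem huL] at this
    exact this.trans ((card_biUnion_le_card_mul _ _ _ fun s _ => by simpa using hJ s).trans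
      (mul_comm _ _).le)
  have hNu : #(L.filter (J.Adj u)) + 1 ≤ Δ := by
    have hsub : L.filter (J.Adj u) ⊆ (J.neighborFinset u).erase s₀ := fun q hq => by
      obtain ⟨hqL, huq⟩ := mem_filter.1 hq
      exact mem_erase.2 ⟨by rintro rfl; exact disjoint_left.1 hLS hqL hs₀, by simpa using huq⟩
    have := card_le_card hsub
    rw [card_erase_of_mem (by simpa [adj_comm] using hs₀u), card_neighborFinset_eq_degree]
      at this
    have := hJ u
    have := (J.degree_pos_iff_exists_adj u).2 ⟨s₀, by simpa [adj_comm] using hs₀u⟩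
    omega
  suffices (#S : ℝ) + #L + #(L.filter (J.Adj u)) * d < F.degree (φ s₀) by exact_mod_cast this
  have hL' : (#L : ℝ) + 1 ≤ Δ * #S := by exact_mod_cast hL
  have hNu' : (#(L.filter (J.Adj u)) : ℝ) + 1 ≤ Δ := by exact_mod_cast hNu
  rw [← hSB] at hB
  have hSβ : (Δ : ℝ) * #S ≤ Δ * β := mul_le_mul_of_nonneg_left hB (by positivity)
  have hNud : (#(L.filter (J.Adj u)) : ℝ) * d ≤ (Δ - 1) * (2 * β - 1) :=
    mul_le_mul (by linarith) (by linarith) (by positivity) (by linarith)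
  linarith [hmin (φ s₀), (Nat.cast_nonneg #S : (0 : ℝ) ≤ #S)]

end Greedy

theorem safeConflicts_of_adj_on [DecidableEq W] {S : Finset W} {φ : W ≃ V}
    [∀ s, Fintype (J.neighborSet s)] (hφB : ∀ p, φ p ∈ B ↔ p ∈ S)
    (hφ : ∀ p ∈ S ∪ S.biUnion (fun s => J.neighborFinset s),
      ∀ q ∈ S ∪ S.biUnion (fun s => J.neighborFinset s), J.Adj p q → F.Adj (φ p) (φ q)) :
    SafeConflicts F J B φ := by
  have hsafe : ∀ r ∉ S ∪ S.biUnion (fun s => J.neighborFinset s), Safe J B φ r := by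
    intro r hr
    simp only [mem_union, mem_biUnion, mem_neighborFinset, not_or, not_exists, not_and] at hr
    exact ⟨by rw [hφB]; exact hr.1, fun q hrq => by rw [hφB]; exact fun hq => hr.2 q hq hrq.symm⟩
  intro p q hpq
  by_cases hp : p ∈ S ∪ S.biUnion (fun s => J.neighborFinset s)
  · by_cases hq : q ∈ S ∪ S.biUnion (fun s => J.neighborFinset s)
    · exact absurd (hφ p hp q hq hpq.1) hpq.2
    · exact Or.inr (hsafe q hq)
  · exact Or.inl (hsafe p hp)

theorem embeds_of_compl_degree_le [Fintype V] [Fintype W] [DecidableEq V] [DecidableEq W]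
    [DecidableRel F.Adj] [DecidableRel J.Adj] {Δ d : ℕ} (hJ : ∀ p, J.degree p ≤ Δ)
    (hd : ∀ z ∉ B, Fᶜ.degree z ≤ d) (hcard : Fintype.card W = Fintype.card V) {β : ℝ}
    (hB : (#B : ℝ) ≤ β) (hdβ : (d : ℝ) + 1 ≤ 2 * β) (hmin : ∀ z, 3 * Δ * β ≤ F.degree z)
    (hn : ((Δ : ℝ) ^ 2 + 4) * β < Fintype.card W) :
    Embeds J F := by
  obtain ⟨S, hSB, hS⟩ := exists_isTwoPacking hJ #B (by
    have : (#B : ℝ) * (Δ ^ 2 + 1) < Fintype.card W := by nlinarith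
    exact_mod_cast this)
  obtain ⟨φ₀, hφ₀B, hφ₀⟩ := exists_equiv_adj_on_nbhd hJ hd hcard hS hSB hB hdβ hmin
  obtain ⟨φ, hφ⟩ := exists_le_comap (safeConflicts_of_adj_on hφ₀B hφ₀)
    fun φ hφ hne => exists_fewer_conflicts hJ hd hcard hB hdβ hn hφ hne
  exact ⟨φ, φ.injective, fun u v h => hφ h⟩

theorem compl_degree_add_one_le [Fintype V] [DecidableEq V] [DecidableRel F.Adj] {ε : ℝ}
    {z : V} (hz : (1 - 2 * ε) * Fintype.card V ≤ F.degree z) :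
    (Fᶜ.degree z : ℝ) + 1 ≤ 2 * (ε * Fintype.card V) := by
  have h : Fᶜ.degree z + 1 + F.degree z = Fintype.card V := by
    have := F.degree_lt_card_verts z
    have := F.degree_compl (v := z)
    omega
  have h' : (Fᶜ.degree z : ℝ) + 1 + F.degree z = Fintype.card V := by exact_mod_cast h
  linarith

end SpanningEmbedding

open SpanningEmbedding in
theorem gen_embed_general {V W : Type} [Fintype V] [Fintype W] (Δ n : ℕ) (ε : ℝ)
    (hε : ε < 1 / ((Δ : ℝ)^2 + 4))
    (F : SimpleGraph V) [DecidableRel F.Adj] (hV : Fintype.card V = n)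
    (hmin : ∀ v, 3 * (Δ : ℝ) * ε * n ≤ (F.degree v : ℝ))
    (hmost : ((Finset.univ.filter fun v =>
        ((F.degree v : ℝ) < (1 - 2*ε) * n)).card : ℝ) ≤ ε * n)
    (J : SimpleGraph W) [DecidableRel J.Adj] (hW : Fintype.card W = n)
    (hJ : J.maxDegree ≤ Δ) :
    Embeds J F := by
  classical
  rcases Nat.eq_zero_or_pos n with rfl | hn
  · have : IsEmpty W := Fintype.card_eq_zero_iff.1 hW
    exact ⟨isEmptyElim, fun a => isEmptyElim a, fun a => isEmptyElim a⟩
  set B := univ.filter fun v => (F.degree v : ℝ) < (1 - 2 * ε) * n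
  have hgood : ∀ z ∉ B, (Fᶜ.degree z : ℝ) + 1 ≤ 2 * (ε * n) := fun z hz => by
    simpa [hV] using compl_degree_add_one_le (F := F) (z := z) (by simpa [B, hV] using hz)
  have hsize : ((Δ : ℝ) ^ 2 + 4) * (ε * n) < n := by
    have := (lt_div_iff₀ (by positivity)).1 hε
    have : (0 : ℝ) < n := by exact_mod_cast hn
    nlinarith
  obtain ⟨z₀, -, hz₀⟩ := exists_mem_notMem_of_card_lt_card (s := B) (t := univ) (by
    have : (#B : ℝ) < n := by nlinarith [(Nat.cast_nonneg #B : (0 : ℝ) ≤ #B)]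
    rw [card_univ, hV]; exact_mod_cast this)
  obtain ⟨z₁, hz₁, hmax⟩ := (univ.filter (· ∉ B)).exists_max_image (Fᶜ.degree ·) ⟨z₀, by simpa⟩
  exact embeds_of_compl_degree_le (fun p => (J.degree_le_maxDegree p).trans hJ)
    (fun z hz => hmax z (by simpa)) (hW.trans hV.symm) hmost (hgood z₁ (by simpa using hz₁))
    (fun z => by simpa [mul_assoc] using hmin z) (by rwa [hW])

/-- Embedding lemma: a dense-enough `n`-vertex graph contains every `n`-vertex graph of
maximum degree at most `Δ`. -/
theorem gen_embed {V W : Type} [Fintype V] [Fintype W] (Δ n : ℕ) (ε : ℝ)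
    (hΔ : 1 ≤ Δ) (hε0 : 0 < ε) (hε : ε < 1 / ((Δ : ℝ)^2 + 4))
    (F : SimpleGraph V) [DecidableRel F.Adj] (hV : Fintype.card V = n)
    (hmin : ∀ v, 3 * (Δ : ℝ) * ε * n ≤ (F.degree v : ℝ))
    (hmost : ((Finset.univ.filter fun v =>
        ((F.degree v : ℝ) < (1 - 2*ε) * n)).card : ℝ) ≤ ε * n)
    (J : SimpleGraph W) [DecidableRel J.Adj] (hW : Fintype.card W = n)
    (hJ : J.maxDegree ≤ Δ) :
    Embeds J F :=
  gen_embed_general Δ n ε hε F hV hmin hmost J hW hJ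
end

section
/- Let G be a graph containing two vertex-disjoint cycles, one of length t and one of length t'. If G contains no cycle of length greater than t, then the bipartite graph between the vertex sets of the two cycles contains no copy of K_{s,s}, where s = ⌈t/t'⌉ + 2. -/
open SimpleGraph Finset

/-!
Among `s ≥ 2` points on a cycle of length `n`, with positions read in `ZMod n`, two are at cyclic
distance at most `n / s`, so the other arc between them is a path of length at least `n - n / s`.
Joining such long arcs of the cycles of lengths `t` and `t'` by two edges of the `K_{s,s}` closes
a cycle of length at least `t + t' - t / s - t' / s + 2`, which exceeds `t` since `s * t' > t + t'`.
-/
open Function SimpleGraph Walk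

theorem ZMod.exists_ne_val_sub_le_div {n s : ℕ} [NeZero n] (hs : 2 ≤ s) (p : Fin s → ZMod n) :
    ∃ i j, i ≠ j ∧ (p j - p i).val ≤ n / s := by
  by_contra! hgap
  have hk : n / s < n := Nat.div_lt_self (NeZero.pos n) (by omega)
  -- the windows `p i + [0, n / s]` are pairwise disjoint, yet `s * (n / s + 1) > n`
  have hwin : ∀ i j (r r' : Fin (n / s + 1)), r' ≤ r →
      p i + (r : ℕ) = p j + (r' : ℕ) → i = j ∧ r = r' := by
    intro i j r r' hle he
    have hdiff : (p j - p i).val = r - r' := by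
      rw [show p j - p i = ((r - r' : ℕ) : ZMod n) by
        push_cast [Nat.cast_sub hle]; linear_combination -he]
      exact ZMod.val_natCast_of_lt (by omega)
    by_cases hij : i = j
    · subst hij
      refine ⟨rfl, Fin.ext ?_⟩
      rw [sub_self, ZMod.val_zero] at hdiff
      omega
    · have := hgap i j hij
      omega
  have hinj : Injective fun x : Fin s × Fin (n / s + 1) => p x.1 + (x.2 : ℕ) := by
    rintro ⟨i, r⟩ ⟨j, r'⟩ he
    rcases le_total r' r with hle | hle
    · obtain ⟨rfl, rfl⟩ := hwin i j r r' hle he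
      rfl
    · obtain ⟨rfl, rfl⟩ := hwin j i r' r hle he.symm
      rfl
  have hcard := Fintype.card_le_of_injective _ hinj
  simp only [Fintype.card_prod, Fintype.card_fin, ZMod.card] at hcard
  exact (Nat.lt_mul_div_succ n (by omega : 0 < s)).not_ge hcard

theorem Nat.div_add_div_lt_of_add_lt_mul {n n' s : ℕ} (h : n + n' < s * n') :
    n / s + n' / s < n' := by
  refine Nat.lt_of_mul_lt_mul_left (a := s) (lt_of_le_of_lt ?_ h)
  rw [mul_add]
  exact add_le_add (Nat.mul_div_le n s) (Nat.mul_div_le n' s)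

theorem Nat.add_lt_ceilDiv_add_two_mul {n n' : ℕ} (hn' : 0 < n') :
    n + n' < ((n + n' - 1) / n' + 2) * n' := by
  have := Nat.lt_div_mul_add (a := n + n' - 1) hn'
  rw [add_mul]
  omega

namespace SimpleGraph.Walk

variable {V : Type*} {G : SimpleGraph V} {u v : V}

theorem IsCycle.neZero_length {c : G.Walk u u} (hc : c.IsCycle) : NeZero c.length :=
  ⟨by have := hc.three_le_length; omega⟩

theorem exists_getVert_val_eq (c : G.Walk u u) (h : v ∈ c.support) :
    ∃ i : ZMod c.length, c.getVert i.val = v := by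
  obtain ⟨k, hk, hkl⟩ := mem_support_iff_exists_getVert.mp h
  refine ⟨k, ?_⟩
  rcases hkl.lt_or_eq with hlt | rfl
  · rwa [ZMod.val_natCast_of_lt hlt]
  · rwa [ZMod.natCast_self, ZMod.val_zero, getVert_zero, ← c.getVert_length]

theorem IsCycle.exists_isPath_getVert_of_le {c : G.Walk u u} (hc : c.IsCycle) {a b : ℕ}
    (hab : a ≤ b) (hb : b < c.length) :
    ∃ P : G.Walk (c.getVert a) (c.getVert b), P.IsPath ∧ P.support ⊆ c.support ∧
      P.length = b - a := by
  refine ⟨((c.take b).drop a).copy (by rw [take_getVert, min_eq_right hab]) rfl,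
    by simpa using (hc.isPath_take hb).drop a, ?_, by simp [drop_length, take_length]; omega⟩
  rw [support_copy]
  exact (((c.take b).isSubwalk_drop a).trans (c.isSubwalk_take b)).support_subset

theorem IsCycle.exists_isPath_getVert_wrap {c : G.Walk u u} (hc : c.IsCycle) {a b : ℕ}
    (hab : a < b) (hb : b ≤ c.length) :
    ∃ P : G.Walk (c.getVert b) (c.getVert a), P.IsPath ∧ P.support ⊆ c.support ∧
      P.length = c.length - b + a := by
  refine ⟨(c.drop b).append (c.take a), IsPath.mk' ?_, ?_,
    by simp [drop_length, take_length]; omega⟩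
  · rw [support_append, drop_support_eq_support_drop_min, support_take, min_eq_left hb,
      ← c.cons_tail_support, List.take_succ_cons, List.tail_cons,
      show b = (b - 1) + 1 by omega, List.drop_succ_cons, List.nodup_append_comm]
    have hsub : (c.support.tail.take a ++ c.support.tail.drop (b - 1)).Sublist c.support.tail := by
      simpa only [List.take_append_drop] using
        (List.take_sublist_take_left (l := c.support.tail) (show a ≤ b - 1 by omega)).append_right
          (c.support.tail.drop (b - 1))
    exact hc.support_nodup.sublist hsub
  · rw [support_append]
    intro z hz
    rcases List.mem_append.mp hz with hz | hz
    · exact (c.isSubwalk_drop b).support_subset hz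
    · exact (c.isSubwalk_take a).support_subset (List.mem_of_mem_tail hz)

theorem IsCycle.exists_isPath_getVert_val {c : G.Walk u u} (hc : c.IsCycle)
    {i j : ZMod c.length} (hij : i ≠ j) :
    ∃ P : G.Walk (c.getVert i.val) (c.getVert j.val), P.IsPath ∧ P.support ⊆ c.support ∧
      P.length = (j - i).val := by
  have := hc.neZero_length
  rcases lt_or_gt_of_ne (ZMod.val_injective _ |>.ne hij) with hlt | hlt
  · rw [ZMod.val_sub hlt.le]
    exact hc.exists_isPath_getVert_of_le hlt.le (ZMod.val_lt j)
  · have : NeZero (i - j) := ⟨sub_ne_zero.mpr hij⟩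
    rw [← neg_sub, ZMod.val_neg_of_ne_zero, ZMod.val_sub hlt.le]
    obtain ⟨P, hP⟩ := hc.exists_isPath_getVert_wrap hlt (ZMod.val_lt i).le
    exact ⟨P, hP.1, hP.2.1, by have := ZMod.val_lt i; omega⟩

theorem IsCycle.exists_long_isPath {c : G.Walk u u} (hc : c.IsCycle) {s : ℕ} (hs : 2 ≤ s)
    {f : Fin s → V} (hf : Injective f) (hfc : ∀ i, f i ∈ c.support) :
    ∃ i j, i ≠ j ∧ ∃ P : G.Walk (f i) (f j), P.IsPath ∧ P.support ⊆ c.support ∧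
      c.length ≤ P.length + c.length / s := by
  have := hc.neZero_length
  choose p hp using fun i => c.exists_getVert_val_eq (hfc i)
  obtain ⟨i, j, hij, hgap⟩ := ZMod.exists_ne_val_sub_le_div hs p
  have hpij : p j ≠ p i := fun h => hij (hf (by rw [← hp i, ← hp j, h]))
  obtain ⟨P, hP, hPc, hPlen⟩ := hc.exists_isPath_getVert_val hpij
  have : NeZero (p j - p i) := ⟨sub_ne_zero.mpr hpij⟩
  refine ⟨j, i, hij.symm, P.copy (hp j) (hp i), by simpa using hP, by simpa using hPc, ?_⟩
  rw [length_copy, hPlen, ← neg_sub, ZMod.val_neg_of_ne_zero]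
  omega

theorem IsPath.isCycle_cons_append_cons {x y x' y' : V} {P : G.Walk x y} {Q : G.Walk x' y'}
    (hP : P.IsPath) (hQ : Q.IsPath) (hPQ : P.support.Disjoint Q.support) (hxy' : x' ≠ y')
    (h : G.Adj y x') (h' : G.Adj y' x) : (cons h' (P.append (cons h Q))).IsCycle := by
  refine (cons_isCycle_iff _ h').mpr ⟨IsPath.mk' ?_, fun he => ?_⟩
  · rw [support_append, support_cons, List.tail_cons]
    exact hP.support_nodup.append hQ.support_nodup hPQ
  · rw [edges_append, edges_cons] at he
    rcases List.mem_append.mp he with he | he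
    · exact hPQ (P.fst_mem_support_of_mem_edges he) Q.end_mem_support
    rcases List.mem_cons.mp he with he | he
    · rcases Sym2.eq_iff.mp he with ⟨rfl, -⟩ | ⟨rfl, -⟩
      · exact hPQ P.end_mem_support Q.end_mem_support
      · exact hxy' rfl
    · exact hPQ P.start_mem_support (Q.snd_mem_support_of_mem_edges he)

end SimpleGraph.Walk

/-- If a graph has two vertex-disjoint cycles of lengths `t ≥ t'` and no cycle longer than `t`,
then the bipartite graph between the cycles has no `K_{s,s}`, `s = ⌈t/t'⌉ + 2`. -/
theorem max_cycle_no_Kss {V : Type} (G : SimpleGraph V) {a b : V}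
    (c : G.Walk a a) (c' : G.Walk b b) (hc : c.IsCycle) (hc' : c'.IsCycle)
    (hdisj : ∀ x, x ∈ c.support → x ∉ c'.support)
    (hmax : ∀ (x : V) (w : G.Walk x x), w.IsCycle → w.length ≤ c.length) :
    ¬ ∃ (f g : Fin ((c.length + c'.length - 1) / c'.length + 2) → V),
        Function.Injective f ∧ Function.Injective g ∧
        (∀ i, f i ∈ c.support) ∧ (∀ i, g i ∈ c'.support) ∧
        ∀ i j, G.Adj (f i) (g j) := by
  rintro ⟨f, g, hf, hg, hfc, hgc, hadj⟩
  have := hc'.neZero_length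
  have hs : 2 ≤ (c.length + c'.length - 1) / c'.length + 2 := Nat.le_add_left 2 _
  obtain ⟨i, i', -, P, hP, hPc, hPlen⟩ := hc.exists_long_isPath hs hf hfc
  obtain ⟨j, j', hjj', Q, hQ, hQc, hQlen⟩ := hc'.exists_long_isPath hs hg hgc
  have hcyc := hP.isCycle_cons_append_cons hQ (fun z hzP hzQ => hdisj z (hPc hzP) (hQc hzQ))
    (hg.ne hjj') (hadj i' j) (hadj i j').symm
  have hlen := hmax _ _ hcyc
  rw [length_cons, length_append, length_cons] at hlen
  have hgap := Nat.div_add_div_lt_of_add_lt_mul <|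
    Nat.add_lt_ceilDiv_add_two_mul (n := c.length) (n' := c'.length) (NeZero.pos _)
  omega
end

section
/- Let k and n be natural numbers and ε a real number with 0 < ε ≤ 1/(k+3) and n > 3/ε². If H is a graph on at least n + (k+2)εn vertices whose complement contains no cycle of length at least ε²n, then H contains a copy of P_n^k, the k-th power of a path on n vertices. -/
open SimpleGraph Finset

/-!
Let `G = Hᶜ` and take a normal (depth-first) spanning forest of `G`: every edge of `G` joins a
vertex to one of its ancestors. An edge spanning `g ≥ 2` levels closes a cycle of length `g + 1`
with the tree path, so every edge of `G` spans fewer than `T = ⌊ε²n⌋` levels. Hence the classes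
of vertices whose depths agree mod `T` are cliques of `H`, and between two classes every vertex
has at most one `G`-neighbour of smaller depth, so `G` has at most `|X| + |Y|` edges between
classes `X` and `Y`. Discarding the classes with fewer than `5k` vertices loses at most
`5kT ≤ (k + 2)εn` vertices. The remaining cliques are concatenated into one list, the last `k`
vertices of each class being completely joined in `H` to the first `k` of the next; few edges of
`G` between two classes leave room for such a choice. Any `n` consecutive entries span `P_n^k`.
-/

lemma Nat.eq_of_mod_eq_of_lt_add {a b T : ℕ} (h : a % T = b % T) (hab : a ≤ b) (hb : b < a + T) :
    a = b := by
  have := Nat.eq_zero_of_dvd_of_lt ((Nat.modEq_iff_dvd' hab).1 h) (by omega)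
  omega

section Bipartite

variable {α β : Type*} (r : α → β → Prop) [∀ a b, Decidable (r a b)] {A : Finset α}
  {B : Finset β} {k : ℕ}

/-- Take `k` elements of the larger side `A` with at most three partners each, and `k` elements
of `B` avoiding their partners. -/
lemma exists_forall_not_rel_of_card_le (hB : 4 * k ≤ #B) (hBA : #B ≤ #A)
    (hr : ∑ a ∈ A, #(B.bipartiteAbove r a) ≤ #A + #B) :
    ∃ L ⊆ A, ∃ M ⊆ B, #L = k ∧ #M = k ∧ ∀ a ∈ L, ∀ b ∈ M, ¬r a b := by
  classical
  have hrest : #{a ∈ A | ¬#(B.bipartiteAbove r a) ≤ 3} • 4 ≤ #A + #B :=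
    calc #{a ∈ A | ¬#(B.bipartiteAbove r a) ≤ 3} • 4
        ≤ ∑ a ∈ A with ¬#(B.bipartiteAbove r a) ≤ 3, #(B.bipartiteAbove r a) :=
          card_nsmul_le_sum _ _ _ fun a ha => by simp only [mem_filter] at ha; omega
      _ ≤ ∑ a ∈ A, #(B.bipartiteAbove r a) := sum_le_sum_of_subset (filter_subset _ _)
      _ ≤ #A + #B := hr
  rw [smul_eq_mul] at hrest
  have hsplit := card_filter_add_card_filter_not (s := A) fun a => #(B.bipartiteAbove r a) ≤ 3
  obtain ⟨L, hLA, hL⟩ := exists_subset_card_eq (s := {a ∈ A | #(B.bipartiteAbove r a) ≤ 3})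
    (n := k) (by omega)
  let N := L.biUnion fun a => B.bipartiteAbove r a
  have hN : #N ≤ 3 * k :=
    calc #N ≤ ∑ a ∈ L, #(B.bipartiteAbove r a) := card_biUnion_le
      _ ≤ ∑ _a ∈ L, 3 := sum_le_sum fun a ha => (mem_filter.1 (hLA ha)).2
      _ = 3 * k := by rw [sum_const, smul_eq_mul, hL, mul_comm]
  obtain ⟨M, hMN, hM⟩ := exists_subset_card_eq (s := B \ N) (n := k)
    (by have := le_card_sdiff N B; omega)
  refine ⟨L, hLA.trans (filter_subset _ _), M, hMN.trans sdiff_subset, hL, hM,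
    fun a ha b hb hab => ?_⟩
  obtain ⟨hbB, hbN⟩ := mem_sdiff.1 (hMN hb)
  exact hbN (mem_biUnion.2 ⟨a, ha, (mem_bipartiteAbove r).2 ⟨hbB, hab⟩⟩)

lemma exists_forall_not_rel (hA : 4 * k ≤ #A) (hB : 4 * k ≤ #B)
    (hr : ∑ a ∈ A, #(B.bipartiteAbove r a) ≤ #A + #B) :
    ∃ L ⊆ A, ∃ M ⊆ B, #L = k ∧ #M = k ∧ ∀ a ∈ L, ∀ b ∈ M, ¬r a b := by
  rcases le_total #B #A with h | h
  · exact exists_forall_not_rel_of_card_le r hB h hr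
  · rw [sum_card_bipartiteAbove_eq_sum_card_bipartiteBelow, add_comm] at hr
    obtain ⟨M, hM, L, hL, hMc, hLc, hML⟩ :=
      exists_forall_not_rel_of_card_le (Function.swap r) hA h hr
    exact ⟨L, hL, M, hM, hLc, hMc, fun a ha b hb => hML b hb a ha⟩

end Bipartite

lemma card_le_sum_card_fiber_add {V : Type*} [Fintype V] (f : V → ℕ) {T B : ℕ}
    (hf : ∀ v, f v < T) :
    Fintype.card V ≤ ∑ r ∈ range T with B ≤ #{v | f v = r}, #{v | f v = r} + T * B := by
  classical
  rw [← card_univ, card_eq_sum_card_fiberwise (t := range T) fun v _ => mem_range.2 (hf v),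
    ← sum_filter_add_sum_filter_not (range T) fun r => B ≤ #{v | f v = r}]
  gcongr
  calc ∑ r ∈ range T with ¬B ≤ #{v | f v = r}, #{v | f v = r}
      ≤ ∑ r ∈ range T with ¬B ≤ #{v | f v = r}, B := sum_le_sum fun r hr => by
        simp only [mem_filter] at hr; omega
    _ ≤ ∑ _r ∈ range T, B := sum_le_sum_of_subset (filter_subset _ _)
    _ = T * B := by simp

section PowerPath

variable {V : Type*} (H : SimpleGraph V) (k : ℕ)

def IsPowerPath (l : List V) : Prop :=
  ∀ i j (hij : i < j), j ≤ i + k → ∀ hj : j < l.length, H.Adj (l[i]'(hij.trans hj)) l[j]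

/-- `F` is the part of `X` already joined to the preceding class; the `k` vertices `L` ending the
block of `X` must avoid it. -/
def Linkable (X Y : Finset V) : Prop :=
  ∀ F ⊆ X, #F = k → ∃ L ⊆ X, Disjoint L F ∧ ∃ M ⊆ Y, #L = k ∧ #M = k ∧
    ∀ x ∈ L, ∀ y ∈ M, H.Adj x y

variable {H k}

lemma isPowerPath_of_isClique {l : List V} (hl : l.Nodup) (hH : H.IsClique {x | x ∈ l}) :
    IsPowerPath H k l :=
  fun _ _ hij _ _ => hH (List.getElem_mem _) (List.getElem_mem _)
    fun h => hij.ne (hl.getElem_inj_iff.1 h)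

lemma IsPowerPath.append {l₁ l₂ : List V} (h₁ : IsPowerPath H k l₁) (h₂ : IsPowerPath H k l₂)
    (hcross : ∀ x ∈ l₁.drop (l₁.length - k), ∀ y ∈ l₂.take k, H.Adj x y) :
    IsPowerPath H k (l₁ ++ l₂) := by
  intro i j hij hjk hj
  rw [List.length_append] at hj
  by_cases hj₁ : j < l₁.length
  · rw [List.getElem_append_left (hij.trans hj₁), List.getElem_append_left hj₁]
    exact h₁ i j hij hjk hj₁
  by_cases hi₁ : i < l₁.length
  · rw [List.getElem_append_left hi₁, List.getElem_append_right (by omega)]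
    refine hcross _ (List.mem_iff_getElem.2 ⟨i - (l₁.length - k), by simp; omega, ?_⟩) _
      (List.mem_iff_getElem.2 ⟨j - l₁.length, by simp; omega, by simp⟩)
    rw [List.getElem_drop]
    congr 1
    omega
  · rw [List.getElem_append_right (by omega), List.getElem_append_right (by omega)]
    exact h₂ (i - l₁.length) (j - l₁.length) (by omega) (by omega) (by omega)

lemma IsPowerPath.embeds {l : List V} (hl : l.Nodup) (hH : IsPowerPath H k l) {n : ℕ}
    (hn : n ≤ l.length) : Embeds (pathPower n k) H := by
  refine ⟨fun i => l[i.1], fun i j hij => Fin.ext (hl.getElem_inj_iff.1 hij), ?_⟩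
  rintro i j ⟨hne, hdist⟩
  simp only [Nat.dist] at hdist
  rcases lt_or_gt_of_ne (Fin.val_ne_of_ne hne) with h | h
  · exact hH i j h (by omega) (by omega)
  · exact (hH j i h (by omega) (by omega)).symm

lemma exists_block [DecidableEq V] {X F L : Finset V} (hF : F ⊆ X) (hL : L ⊆ X)
    (hLF : Disjoint L F) :
    ∃ b : List V, b.Nodup ∧ (∀ x ∈ b, x ∈ X) ∧ b.length = #X ∧ b.take #F = F.toList ∧
      b.drop (b.length - #L) = L.toList := by
  have hFL : F ∪ L ⊆ X := union_subset hF hL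
  have hmid : #(X \ (F ∪ L)) + (#F + #L) = #X := by
    rw [← card_union_of_disjoint hLF.symm, card_sdiff_add_card_eq_card hFL]
  refine ⟨F.toList ++ ((X \ (F ∪ L)).toList ++ L.toList), ?_, ?_, by simp; omega,
    List.take_left' (length_toList F), ?_⟩
  · simp only [List.nodup_append, nodup_toList, mem_toList, true_and]
    refine ⟨fun a ha b hb => ?_, fun a ha b hb => ?_⟩
    · rintro rfl
      exact (mem_sdiff.1 ha).2 (mem_union_right F hb)
    · rintro rfl
      rcases List.mem_append.1 hb with hb | hb
      · exact (mem_sdiff.1 (mem_toList.1 hb)).2 (mem_union_left L ha)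
      · exact disjoint_left.1 hLF (mem_toList.1 hb) ha
  · intro x hx
    simp only [List.mem_append, mem_toList] at hx
    rcases hx with hx | hx | hx
    · exact hF hx
    · exact (mem_sdiff.1 hx).1
    · exact hL hx
  · rw [← List.append_assoc]
    exact List.drop_left' (by simp; omega)

theorem exists_isPowerPath_cons [DecidableEq V] (Qs : List (Finset V)) :
    ∀ X F : Finset V, (X :: Qs).Pairwise Disjoint → (∀ Y ∈ X :: Qs, H.IsClique (Y : Set V)) →
      (X :: Qs).IsChain (Linkable H k) → F ⊆ X → #F = k →
      ∃ l : List V, l.Nodup ∧ IsPowerPath H k l ∧ l.length = ((X :: Qs).map card).sum ∧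
        (∀ x ∈ l, ∃ Y ∈ X :: Qs, x ∈ Y) ∧ l.take k = F.toList := by
  induction Qs with
  | nil =>
    intro X F _ hcl _ hF hFk
    obtain ⟨b, hb, hbX, hblen, hbF, -⟩ := exists_block hF (empty_subset X) (disjoint_empty_left F)
    refine ⟨b, hb, isPowerPath_of_isClique hb ((hcl X List.mem_cons_self).subset hbX),
      by simp [hblen], fun x hx => ⟨X, List.mem_cons_self, hbX x hx⟩, hFk ▸ hbF⟩
  | cons Y Qs ih =>
    intro X F hdisj hcl hchain hF hFk
    obtain ⟨L, hL, hLF, M, hM, hLk, hMk, hLM⟩ := List.rel_of_isChain_cons_cons hchain F hF hFk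
    obtain ⟨l, hl, hlpp, hllen, hlmem, hltake⟩ := ih Y M (List.pairwise_cons.1 hdisj).2
      (fun Z hZ => hcl Z (List.mem_cons_of_mem _ hZ)) hchain.of_cons hM hMk
    obtain ⟨b, hb, hbX, hblen, hbF, hbL⟩ := exists_block hF hL hLF
    refine ⟨b ++ l, ?_, ?_, ?_, ?_, ?_⟩
    · refine List.nodup_append.2 ⟨hb, hl, fun x hx y hy hxy => ?_⟩
      obtain ⟨Z, hZ, hyZ⟩ := hlmem y hy
      exact disjoint_left.1 ((List.pairwise_cons.1 hdisj).1 Z hZ) (hbX x hx) (hxy ▸ hyZ)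
    · refine (isPowerPath_of_isClique hb ((hcl X List.mem_cons_self).subset hbX)).append hlpp ?_
      rw [← hLk, hbL, hLk, hltake]
      intro x hx y hy
      exact hLM x (mem_toList.1 hx) y (mem_toList.1 hy)
    · simp [hblen, hllen]
    · intro x hx
      rcases List.mem_append.1 hx with hx | hx
      · exact ⟨X, List.mem_cons_self, hbX x hx⟩
      · obtain ⟨Z, hZ, hxZ⟩ := hlmem x hx
        exact ⟨Z, List.mem_cons_of_mem _ hZ, hxZ⟩
    · rw [List.take_append_of_le_length (by rw [hblen, ← hFk]; exact card_le_card hF), ← hFk, hbF]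

theorem exists_isPowerPath [DecidableEq V] (Qs : List (Finset V)) (hdisj : Qs.Pairwise Disjoint)
    (hcl : ∀ X ∈ Qs, H.IsClique (X : Set V)) (hlink : Qs.IsChain (Linkable H k))
    (hk : ∀ X ∈ Qs, k ≤ #X) :
    ∃ l : List V, l.Nodup ∧ IsPowerPath H k l ∧ l.length = (Qs.map card).sum := by
  cases Qs with
  | nil => exact ⟨[], List.nodup_nil, fun _ _ _ _ hj => absurd hj (by simp), rfl⟩
  | cons X Qs =>
    obtain ⟨F, hF, hFk⟩ := exists_subset_card_eq (hk X List.mem_cons_self)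
    obtain ⟨l, hl, hpp, hlen, -⟩ := exists_isPowerPath_cons Qs X F hdisj hcl hlink hF hFk
    exact ⟨l, hl, hpp, hlen⟩

end PowerPath

def IsAncestor {V : Type*} (p : V → V) (d : V → ℕ) (u v : V) : Prop :=
  d u ≤ d v ∧ p^[d v - d u] v = u

lemma isAncestor_refl {V : Type*} (p : V → V) (d : V → ℕ) (u : V) : IsAncestor p d u u :=
  ⟨le_rfl, by simp⟩

namespace SimpleGraph

variable {V : Type*} (G : SimpleGraph V)

/-- Parent pointers `p` and depths `d`: the roots are the vertices of depth `0`, where `p` is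
unconstrained, and the ancestors of `v` are the iterates `p^[i] v` with `i ≤ d v`. -/
structure IsRootedForest (p : V → V) (d : V → ℕ) : Prop where
  adj_parent : ∀ v, 0 < d v → G.Adj v (p v)
  depth_parent : ∀ v, 0 < d v → d (p v) + 1 = d v

structure IsNormalForest (p : V → V) (d : V → ℕ) : Prop extends G.IsRootedForest p d where
  isAncestor_of_adj : ∀ u v, G.Adj u v → IsAncestor p d u v ∨ IsAncestor p d v u

variable {G} {H : SimpleGraph V} {p : V → V} {d : V → ℕ} {u v w : V} {T k : ℕ}

namespace IsRootedForest

lemma depth_iterate (hF : G.IsRootedForest p d) {i : ℕ} (hi : i ≤ d v) :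
    d (p^[i] v) = d v - i := by
  induction i with
  | zero => rfl
  | succ i ih =>
    have hi' := ih (by omega)
    have hpar := hF.depth_parent (p^[i] v) (by omega)
    rw [Function.iterate_succ_apply']
    omega

lemma depth_lt_card [Fintype V] (hF : G.IsRootedForest p d) (v : V) :
    d v < Fintype.card V := by
  have hinj : Function.Injective fun i : Fin (d v + 1) => p^[i] v := by
    intro i j hij
    have hd := congrArg d hij
    simp only at hd
    rw [hF.depth_iterate (by omega), hF.depth_iterate (by omega)] at hd
    omega
  simpa using Fintype.card_le_of_injective _ hinj

lemma isAncestor_of_parent (hF : G.IsRootedForest p d) (hw : 0 < d w)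
    (h : IsAncestor p d u (p w)) : IsAncestor p d u w := by
  obtain ⟨hle, hit⟩ := h
  have := hF.depth_parent w hw
  refine ⟨by omega, ?_⟩
  rw [show d w - d u = d (p w) - d u + 1 by omega, Function.iterate_succ_apply, hit]

lemma parent_isAncestor (hF : G.IsRootedForest p d) (h : IsAncestor p d u w) (hwu : w ≠ u) :
    0 < d w ∧ IsAncestor p d u (p w) := by
  obtain ⟨hle, hit⟩ := h
  have hlt : d u < d w := by
    refine hle.lt_of_ne fun heq => hwu ?_
    rwa [heq, Nat.sub_self, Function.iterate_zero_apply] at hit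
  have := hF.depth_parent w (by omega)
  refine ⟨by omega, by omega, ?_⟩
  rwa [show d w - d u = d (p w) - d u + 1 by omega, Function.iterate_succ_apply] at hit

/-- Hanging the subtree of `u` below `v` keeps a rooted forest and deepens every vertex of the
subtree. -/
lemma exists_sum_depth_lt [Fintype V] (hF : G.IsRootedForest p d) (huv : G.Adj u v)
    (hd : d u ≤ d v) (hv : ¬IsAncestor p d u v) :
    ∃ p' d', G.IsRootedForest p' d' ∧ ∑ w, d w < ∑ w, d' w := by
  classical
  set d' : V → ℕ := fun w => if IsAncestor p d u w then d w + (d v + 1 - d u) else d w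
  have hparent : ∀ w, 0 < d' w → G.Adj w (Function.update p u v w) ∧
      d' (Function.update p u v w) + 1 = d' w := by
    intro w hw
    by_cases hwu : w = u
    · subst hwu
      simp only [d', Function.update_self, hv, isAncestor_refl, if_true, if_false]
      exact ⟨huv, by omega⟩
    rw [Function.update_of_ne hwu]
    by_cases hA : IsAncestor p d u w
    · obtain ⟨hpos, hA'⟩ := hF.parent_isAncestor hA hwu
      simp only [d', hA, hA', if_true]
      exact ⟨hF.adj_parent w hpos, by have := hF.depth_parent w hpos; omega⟩
    · have hpos : 0 < d w := by simpa [d', hA] using hw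
      have hA' : ¬IsAncestor p d u (p w) := fun h => hA (hF.isAncestor_of_parent hpos h)
      simp only [d', hA, hA', if_false]
      exact ⟨hF.adj_parent w hpos, hF.depth_parent w hpos⟩
  refine ⟨_, d', ⟨fun w hw => (hparent w hw).1, fun w hw => (hparent w hw).2⟩, ?_⟩
  refine Finset.sum_lt_sum (fun w _ => ?_) ⟨u, mem_univ u, ?_⟩
  · simp only [d']
    split_ifs <;> omega
  · simp only [d', isAncestor_refl, if_true]
    omega

lemma exists_isPath (hF : G.IsRootedForest p d) (v : V) {i : ℕ} (hi : i ≤ d v) :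
    ∃ q : G.Walk v (p^[i] v), q.IsPath ∧ q.length = i ∧ ∀ x ∈ q.support, d x ≤ d v := by
  induction i generalizing v with
  | zero => exact ⟨Walk.nil, by simp⟩
  | succ i ih =>
    have hpar := hF.depth_parent v (by omega)
    obtain ⟨q, hq, hlen, hdepth⟩ := ih (p v) (by omega)
    refine ⟨Walk.cons (hF.adj_parent v (by omega)) q, ?_, by simp [hlen], ?_⟩
    · exact (Walk.cons_isPath_iff _ _).2 ⟨hq, fun hv => by have := hdepth v hv; omega⟩
    · intro x hx
      rcases List.mem_cons.1 (Walk.support_cons _ _ ▸ hx) with rfl | hx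
      · exact le_rfl
      · have := hdepth x hx; omega

end IsRootedForest

/-- A rooted spanning forest of maximal total depth is normal: an edge between two vertices
neither of which is an ancestor of the other would allow a deeper forest. -/
theorem exists_isNormalForest [Fintype V] (G : SimpleGraph V) :
    ∃ p d, G.IsNormalForest p d := by
  let S : Set ℕ := {s | ∃ p d, G.IsRootedForest p d ∧ s = ∑ w, d w}
  have hS : S.Nonempty := ⟨0, id, fun _ => 0, ⟨by simp, by simp⟩, by simp⟩
  have hbdd : BddAbove S := by
    refine ⟨Fintype.card V * Fintype.card V, ?_⟩
    rintro _ ⟨p, d, hF, rfl⟩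
    calc ∑ w, d w ≤ ∑ _w : V, Fintype.card V := sum_le_sum fun w _ => (hF.depth_lt_card w).le
      _ = Fintype.card V * Fintype.card V := by simp
  obtain ⟨p, d, hF, hmax⟩ := Nat.sSup_mem hS hbdd
  have key : ∀ u v, G.Adj u v → d u ≤ d v → IsAncestor p d u v := by
    intro u v huv hd
    by_contra hv
    obtain ⟨p', d', hF', hlt⟩ := hF.exists_sum_depth_lt huv hd hv
    have := le_csSup hbdd ⟨p', d', hF', rfl⟩
    omega
  refine ⟨p, d, hF, fun u v huv => ?_⟩
  rcases le_total (d u) (d v) with h | h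
  · exact .inl (key u v huv h)
  · exact .inr (key v u huv.symm h)

namespace IsNormalForest

lemma depth_ne (hF : G.IsNormalForest p d) (huv : G.Adj u v) : d u ≠ d v := by
  intro h
  rcases hF.isAncestor_of_adj u v huv with ⟨-, hit⟩ | ⟨-, hit⟩ <;>
    simp only [h, Nat.sub_self, Function.iterate_zero_apply] at hit
  · exact huv.ne hit.symm
  · exact huv.ne hit

lemma iterate_eq (hF : G.IsNormalForest p d) (huv : G.Adj u v) (h : d u < d v) :
    p^[d v - d u] v = u := by
  rcases hF.isAncestor_of_adj u v huv with ⟨-, hit⟩ | ⟨hle, -⟩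
  · exact hit
  · omega

lemma exists_isCycle (hF : G.IsNormalForest p d) (huv : G.Adj u v) (h : d u + 2 ≤ d v) :
    ∃ c : G.Walk u u, c.IsCycle ∧ c.length = d v - d u + 1 := by
  obtain ⟨q, hq, hlen, -⟩ := hF.exists_isPath v (i := d v - d u) (by omega)
  let q' := q.copy rfl (hF.iterate_eq huv (by omega))
  have hq' : q'.IsPath := (Walk.isPath_copy _ _ _).2 hq
  refine ⟨Walk.cons huv q', (Walk.cons_isCycle_iff _ _).2 ⟨hq', fun he => ?_⟩, by simp [q', hlen]⟩
  have := hq'.length_eq_one_of_mem_edges (Sym2.eq_swap ▸ he)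
  simp only [q', Walk.length_copy] at this
  omega

lemma depth_sub_lt (hF : G.IsNormalForest p d) (hT : 2 ≤ T)
    (hcycle : ∀ x (c : G.Walk x x), c.IsCycle → c.length ≤ T) (huv : G.Adj u v) (h : d u < d v) :
    d v - d u < T := by
  by_cases h2 : d u + 2 ≤ d v
  · obtain ⟨c, hc, hlen⟩ := hF.exists_isCycle huv h2
    have := hcycle u c hc
    omega
  · omega

lemma not_adj_of_mod_eq (hF : G.IsNormalForest p d)
    (hT : ∀ u v, G.Adj u v → d u < d v → d v - d u < T) (h : d u % T = d v % T) :
    ¬G.Adj u v := by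
  intro huv
  rcases (hF.depth_ne huv).lt_or_gt with hlt | hlt
  · have := hT u v huv hlt
    exact hlt.ne (Nat.eq_of_mod_eq_of_lt_add h hlt.le (by omega))
  · have := hT v u huv.symm hlt
    exact hlt.ne (Nat.eq_of_mod_eq_of_lt_add h.symm hlt.le (by omega))

lemma eq_of_adj_of_mod_eq (hF : G.IsNormalForest p d)
    (hT : ∀ u v, G.Adj u v → d u < d v → d v - d u < T) {x x' : V} (hx : G.Adj x v)
    (hx' : G.Adj x' v) (hdx : d x < d v) (hdx' : d x' < d v) (h : d x % T = d x' % T) :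
    x = x' := by
  have := hT x v hx hdx
  have := hT x' v hx' hdx'
  have hxx : d x = d x' := by
    rcases le_total (d x) (d x') with hle | hle
    · exact Nat.eq_of_mod_eq_of_lt_add h hle (by omega)
    · exact (Nat.eq_of_mod_eq_of_lt_add h.symm hle (by omega)).symm
  rw [← hF.iterate_eq hx hdx, ← hF.iterate_eq hx' hdx', hxx]

/-- Every vertex has at most one neighbour of smaller depth on the other side. -/
lemma sum_card_bipartiteAbove_le [DecidableRel G.Adj] (hF : G.IsNormalForest p d)
    (hT : ∀ u v, G.Adj u v → d u < d v → d v - d u < T) {A B : Finset V} {r r' : ℕ}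
    (hA : ∀ a ∈ A, d a % T = r) (hB : ∀ b ∈ B, d b % T = r') :
    ∑ a ∈ A, #(B.bipartiteAbove G.Adj a) ≤ #A + #B := by
  classical
  let up : V → V → Prop := fun a b => G.Adj a b ∧ d a < d b
  have hsplit : ∀ a ∈ A, #(B.bipartiteAbove G.Adj a) ≤ #(B.bipartiteAbove up a) + 1 := by
    intro a _
    have hdown : #{b ∈ B | G.Adj a b ∧ d b < d a} ≤ 1 := by
      refine card_le_one.2 fun b hb b' hb' => ?_
      simp only [mem_filter] at hb hb'
      exact hF.eq_of_adj_of_mod_eq hT hb.2.1.symm hb'.2.1.symm hb.2.2 hb'.2.2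
        (by rw [hB b hb.1, hB b' hb'.1])
    calc #(B.bipartiteAbove G.Adj a)
        ≤ #(B.bipartiteAbove up a ∪ {b ∈ B | G.Adj a b ∧ d b < d a}) := by
          refine card_le_card fun b hb => ?_
          simp only [mem_bipartiteAbove, mem_union, mem_filter, up] at hb ⊢
          rcases (hF.depth_ne hb.2).lt_or_gt with h | h
          · exact .inl ⟨hb.1, hb.2, h⟩
          · exact .inr ⟨hb.1, hb.2, h⟩
      _ ≤ #(B.bipartiteAbove up a) + 1 := (card_union_le _ _).trans (by omega)
  have hup : ∑ a ∈ A, #(B.bipartiteAbove up a) ≤ #B := by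
    rw [sum_card_bipartiteAbove_eq_sum_card_bipartiteBelow]
    refine (sum_le_sum fun b _ => card_le_one.2 fun a ha a' ha' => ?_).trans (by simp)
    simp only [mem_bipartiteBelow, up] at ha ha'
    exact hF.eq_of_adj_of_mod_eq hT ha.2.1 ha'.2.1 ha.2.2 ha'.2.2 (by rw [hA a ha.1, hA a' ha'.1])
  calc ∑ a ∈ A, #(B.bipartiteAbove G.Adj a) ≤ ∑ a ∈ A, (#(B.bipartiteAbove up a) + 1) :=
        sum_le_sum hsplit
    _ ≤ #A + #B := by rw [sum_add_distrib, sum_const, smul_eq_mul, mul_one]; omega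

lemma isClique (hF : Hᶜ.IsNormalForest p d)
    (hT : ∀ u v, Hᶜ.Adj u v → d u < d v → d v - d u < T) {X : Finset V} {r : ℕ}
    (hX : ∀ x ∈ X, d x % T = r) : H.IsClique (X : Set V) := by
  intro x hx y hy hxy
  by_contra h
  exact hF.not_adj_of_mod_eq hT (by rw [hX x hx, hX y hy]) ⟨hxy, h⟩

lemma linkable (hF : Hᶜ.IsNormalForest p d)
    (hT : ∀ u v, Hᶜ.Adj u v → d u < d v → d v - d u < T) {X Y : Finset V} {r r' : ℕ}
    (hrr' : r ≠ r') (hX : ∀ x ∈ X, d x % T = r) (hY : ∀ y ∈ Y, d y % T = r')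
    (hXk : 5 * k ≤ #X) (hYk : 4 * k ≤ #Y) : Linkable H k X Y := by
  classical
  intro F hFX hFk
  obtain ⟨L, hL, M, hM, hLk, hMk, hLM⟩ := exists_forall_not_rel Hᶜ.Adj (A := X \ F) (B := Y)
    (by rw [card_sdiff_of_subset hFX]; omega) hYk
    (hF.sum_card_bipartiteAbove_le hT (fun a ha => hX a (mem_sdiff.1 ha).1) hY)
  refine ⟨L, hL.trans sdiff_subset, disjoint_of_subset_left hL sdiff_disjoint, M, hM, hLk, hMk,
    fun x hx y hy => ?_⟩
  have hxX := (mem_sdiff.1 (hL hx)).1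
  by_contra h
  refine hLM x hx y hy ⟨fun hxy => hrr' ?_, h⟩
  rw [← hX x hxX, hxy, hY y (hM hy)]

theorem embeds_pathPower [Fintype V] {n : ℕ} (hF : Hᶜ.IsNormalForest p d) (hT0 : 0 < T)
    (hT : ∀ u v, Hᶜ.Adj u v → d u < d v → d v - d u < T)
    (hcard : n + T * (5 * k) ≤ Fintype.card V) : Embeds (pathPower n k) H := by
  classical
  let Q : ℕ → Finset V := fun r => {v | d v % T = r}
  let R := {r ∈ range T | 5 * k ≤ #(Q r)}
  have hQ : ∀ r, ∀ v ∈ Q r, d v % T = r := fun r v hv => (mem_filter.1 hv).2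
  have hR : ∀ r ∈ R.toList, 5 * k ≤ #(Q r) := fun r hr => (mem_filter.1 (mem_toList.1 hr)).2
  obtain ⟨l, hl, hpp, hlen⟩ := exists_isPowerPath (H := H) (k := k) (R.toList.map Q)
    (List.pairwise_map.2 <| R.nodup_toList.imp fun hne =>
      disjoint_filter.2 fun _ _ h h' => hne (h.symm.trans h'))
    (fun X hX => by
      obtain ⟨r, -, rfl⟩ := List.mem_map.1 hX
      exact hF.isClique hT (hQ r))
    (List.pairwise_map.2 <| R.nodup_toList.imp_of_mem fun hr hr' hne =>
      hF.linkable hT hne (hQ _) (hQ _) (hR _ hr) (by have := hR _ hr'; omega)).isChain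
    (fun X hX => by
      obtain ⟨r, hr, rfl⟩ := List.mem_map.1 hX
      have := hR r hr
      omega)
  have hsum : Fintype.card V ≤ ∑ r ∈ R, #(Q r) + T * (5 * k) :=
    card_le_sum_card_fiber_add (fun v => d v % T) fun v => Nat.mod_lt _ hT0
  refine hpp.embeds hl ?_
  rw [hlen, List.map_map, sum_map_toList]
  exact (by omega : n ≤ ∑ r ∈ R, #(Q r))

end IsNormalForest

end SimpleGraph

lemma floor_sq_mul_mul_le {k n : ℕ} {ε : ℝ} (hε0 : 0 < ε) (hε : ε ≤ 1 / ((k : ℝ) + 3)) :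
    ((⌊ε ^ 2 * n⌋₊ * (5 * k) : ℕ) : ℝ) ≤ ((k : ℝ) + 2) * ε * n := by
  have hfloor : (⌊ε ^ 2 * n⌋₊ : ℝ) ≤ ε ^ 2 * n := Nat.floor_le (by positivity)
  have hεk : ε * ((k : ℝ) + 3) ≤ 1 := by rwa [le_div_iff₀ (by positivity)] at hε
  have h5 : 5 * (k : ℝ) * ε ≤ (k : ℝ) + 2 := by nlinarith
  push_cast
  calc (⌊ε ^ 2 * n⌋₊ : ℝ) * (5 * k) ≤ ε ^ 2 * n * (5 * k) := by gcongr
    _ = (5 * k * ε) * (ε * n) := by ring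
    _ ≤ ((k : ℝ) + 2) * (ε * n) := by gcongr
    _ = ((k : ℝ) + 2) * ε * n := by ring

/-- If the complement of `H` has no long cycle and `H` has slightly more than `n` vertices,
then `H` contains `P_n^k`. -/
theorem cover_W {V : Type} [Fintype V] (H : SimpleGraph V) (k n : ℕ) (ε : ℝ)
    (hε0 : 0 < ε) (hε : ε ≤ 1 / ((k : ℝ) + 3)) (hn : 3 / ε^2 < (n : ℝ))
    (hcard : (n : ℝ) + ((k : ℝ) + 2) * ε * n ≤ Fintype.card V)
    (hcomp : ∀ (x : V) (w : Hᶜ.Walk x x), w.IsCycle → (w.length : ℝ) < ε^2 * n) :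
    Embeds (pathPower n k) H := by
  obtain ⟨p, d, hF⟩ := exists_isNormalForest Hᶜ
  have hT : 2 ≤ ⌊ε ^ 2 * n⌋₊ := Nat.le_floor <| by
    rw [div_lt_iff₀ (by positivity)] at hn
    push_cast
    linarith
  refine hF.embeds_pathPower (by omega)
    (fun u v huv h => hF.depth_sub_lt hT (fun x c hc => Nat.le_floor (hcomp x c hc).le) huv h) ?_
  have := floor_sq_mul_mul_le (n := n) hε0 hε
  have : ((n + ⌊ε ^ 2 * n⌋₊ * (5 * k) : ℕ) : ℝ) ≤ Fintype.card V := by push_cast at this ⊢; linarith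
  exact_mod_cast this
end

section
/- Fix k ≥ 2 and t ≥ 1, and let n = (k+1)t. Partition a vertex set of size t(k+1)² − 2k − 1 into sets A_1,…,A_k of size kt−1 each, B_1,…,B_k of size 2t−1 each, and C of size t−1. Colour edges: red inside each A_i, blue inside each B_i, blue between distinct A_i and A_j, red between distinct B_i and B_j, red between A_i and B_i for each i, blue between A_i and B_j for i ≠ j, blue between C and each A_i, red between C and each B_i, and arbitrarily inside C. Then this two-coloured complete graph contains no red copy of P_n^k. -/
open SimpleGraph Finset

/-!
An independent set of `P_{(k+1)t}^k` meets each of the `t` consecutive blocks of `k + 1`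
vertices at most once, so each blue clique `B_i` holds at most `t` vertices of a red copy.
If the copy meets some `A_i`, it lies entirely in `A_i ∪ B_i`: the red neighbours of `A_i` lie in
`A_i ∪ B_i`, `B_i` is blue, and for `k ≥ 2` any three consecutive vertices of the path form a
triangle, so no vertex of `B_i` can lead the copy out. That leaves room for only
`(kt - 1) + t` vertices. Otherwise the copy lies in `B_1 ∪ ⋯ ∪ B_k ∪ C`, with room for only
`kt + (t - 1)`.
-/

theorem Nat.dist_le_of_div_eq {k a b : ℕ} (h : a / (k + 1) = b / (k + 1)) : Nat.dist a b ≤ k := by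
  have ha := Nat.div_add_mod a (k + 1)
  have hb := Nat.div_add_mod b (k + 1)
  have := Nat.mod_lt a k.add_one_pos
  have := Nat.mod_lt b k.add_one_pos
  rw [h] at ha
  simp only [Nat.dist]
  omega

theorem card_le_of_isIndepSet_pathPower {k t : ℕ} {s : Finset (Fin ((k + 1) * t))}
    (hs : (pathPower ((k + 1) * t) k).IsIndepSet s) : #s ≤ t := by
  -- consecutive blocks of `k + 1` vertices are cliques, and there are `t` of them
  simpa using card_le_card_of_injOn (t := range t) (fun a => a.val / (k + 1))
    (fun a _ => by
      simpa [Nat.div_lt_iff_lt_mul] using (mul_comm (k + 1) t ▸ a.isLt : a.val < t * (k + 1)))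
    (fun a ha b hb hab => by
      by_contra hne
      exact hs ha hb hne ⟨hne, Nat.dist_le_of_div_eq hab⟩)

theorem pathGraph_le_pathPower {n k : ℕ} (hk : 1 ≤ k) : pathGraph n ≤ pathPower n k := by
  intro i j h
  rw [pathGraph_adj] at h
  exact ⟨fun hij => by omega, by simp only [Nat.dist]; omega⟩

theorem pathPower_adj_of_pathGraph_adj_adj {n k : ℕ} (hk : 2 ≤ k) {x y z : Fin n}
    (hxy : (pathGraph n).Adj x y) (hyz : (pathGraph n).Adj y z) (hxz : x ≠ z) :
    (pathPower n k).Adj x z := by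
  rw [pathGraph_adj] at hxy hyz
  exact ⟨hxz, by simp only [Nat.dist]; omega⟩

theorem SimpleGraph.Preconnected.forall_or_of_closed {W : Type*} {G H : SimpleGraph W}
    {P Q : W → Prop} (hG : G.Preconnected) (hGH : G ≤ H)
    (hsq : ∀ x y z, G.Adj x y → G.Adj y z → x ≠ z → H.Adj x z)
    (hP : ∀ x y, H.Adj x y → P x → P y ∨ Q y) (hQ : ∀ x y, H.Adj x y → Q x → ¬ Q y)
    {a : W} (ha : P a) (x : W) : P x ∨ Q x := by
  -- the invariant: every `Q`-vertex has only `P`-vertices as `G`-neighbours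
  let S : W → Prop := fun x => P x ∨ (Q x ∧ ∀ y, G.Adj x y → P y)
  have step : ∀ x y, G.Adj x y → S x → S y := by
    rintro x y hxy (hx | ⟨-, hx⟩)
    · refine (hP x y (hGH hxy) hx).imp_right fun hy => ⟨hy, fun z hyz => ?_⟩
      by_cases hxz : x = z
      · exact hxz ▸ hx
      · exact (hP x z (hsq x y z hxy hyz hxz) hx).resolve_right
          (hQ y z (hGH hyz) hy)
    · exact Or.inl (hx y hxy)
  have hS : S x := by
    induction (reachable_iff_reflTransGen a x).1 (hG a x) with
    | refl => exact Or.inl ha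
    | tail _ hyz ih => exact step _ _ hyz ih
  exact hS.imp_right And.left

theorem card_filter_comp_le {α β : Type*} [Fintype α] [Fintype β] {f : α → β}
    (hf : Function.Injective f) (p : β → Prop) [DecidablePred p] :
    #{a | p (f a)} ≤ Nat.card {b // p b} := by
  rw [Nat.card_eq_fintype_card, Fintype.card_subtype]
  exact card_le_card_of_injOn f (fun a ha => by simpa using ha) hf.injOn

theorem card_filter_le_of_forall_not_adj {V : Type*} {k t : ℕ} {R : SimpleGraph V}
    {f : Fin ((k + 1) * t) → V}
    (hf : ∀ u v, (pathPower ((k + 1) * t) k).Adj u v → R.Adj (f u) (f v))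
    {p : V → Prop} [DecidablePred p] (hp : ∀ u v, p u → p v → ¬ R.Adj u v) :
    #{a | p (f a)} ≤ t :=
  card_le_of_isIndepSet_pathPower fun a ha b hb hab hadj =>
    hp _ _ (by simpa using ha) (by simpa using hb) (hf a b hadj)

theorem eq_inl_or_eq_inr_inl_of_embedding {V : Type*} {k n : ℕ} {R : SimpleGraph V}
    {L : V → Fin k ⊕ Fin k ⊕ Unit} {f : Fin n → V} (hk : 2 ≤ k)
    (hf : ∀ u v, (pathPower n k).Adj u v → R.Adj (f u) (f v))
    (hblueB : ∀ u v (i : Fin k), L u = Sum.inr (Sum.inl i) → L v = Sum.inr (Sum.inl i) →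
      ¬ R.Adj u v)
    (hblueAA : ∀ u v (i j : Fin k), i ≠ j → L u = Sum.inl i → L v = Sum.inl j → ¬ R.Adj u v)
    (hblueAB : ∀ u v (i j : Fin k), i ≠ j → L u = Sum.inl i → L v = Sum.inr (Sum.inl j) →
      ¬ R.Adj u v)
    (hblueCA : ∀ u v (i : Fin k), L u = Sum.inr (Sum.inr ()) → L v = Sum.inl i → ¬ R.Adj u v)
    {i : Fin k} {a : Fin n} (ha : L (f a) = Sum.inl i) (b : Fin n) :
    L (f b) = Sum.inl i ∨ L (f b) = Sum.inr (Sum.inl i) := by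
  refine (pathGraph_preconnected n).forall_or_of_closed (P := fun x => L (f x) = Sum.inl i)
    (Q := fun x => L (f x) = Sum.inr (Sum.inl i)) (pathGraph_le_pathPower (by omega))
    (fun _ _ _ => pathPower_adj_of_pathGraph_adj_adj hk) (fun x y hxy hx => ?_)
    (fun x y hxy hx hy => hblueB _ _ i hx hy (hf x y hxy)) ha b
  have hred := hf x y hxy
  rcases hy : L (f y) with j | j | ⟨⟩
  · obtain rfl | hij := eq_or_ne i j
    · exact Or.inl rfl
    · exact absurd hred (hblueAA _ _ i j hij hx hy)
  · obtain rfl | hij := eq_or_ne i j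
    · exact Or.inr rfl
    · exact absurd hred (hblueAB _ _ i j hij hx hy)
  · exact absurd hred.symm (hblueCA _ _ i hy hx)

theorem lower_bound_construction_general {V : Type} [Fintype V] (k t : ℕ) (hk : 2 ≤ k) (ht : 1 ≤ t)
    (R : SimpleGraph V) (L : V → Fin k ⊕ Fin k ⊕ Unit)
    (hA : ∀ i : Fin k, Nat.card {v // L v = Sum.inl i} = k*t - 1)
    (hC : Nat.card {v // L v = Sum.inr (Sum.inr ())} = t - 1)
    (hblueB : ∀ u v (i : Fin k), L u = Sum.inr (Sum.inl i) → L v = Sum.inr (Sum.inl i) →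
      ¬ R.Adj u v)
    (hblueAA : ∀ u v (i j : Fin k), i ≠ j → L u = Sum.inl i → L v = Sum.inl j → ¬ R.Adj u v)
    (hblueAB : ∀ u v (i j : Fin k), i ≠ j → L u = Sum.inl i → L v = Sum.inr (Sum.inl j) →
      ¬ R.Adj u v)
    (hblueCA : ∀ u v (i : Fin k), L u = Sum.inr (Sum.inr ()) → L v = Sum.inl i → ¬ R.Adj u v) :
    ¬ Embeds (pathPower ((k+1)*t) k) R := by
  rintro ⟨f, hinj, hf⟩
  have hB (i : Fin k) : #{a | L (f a) = Sum.inr (Sum.inl i)} ≤ t :=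
    card_filter_le_of_forall_not_adj hf (hblueB · · i)
  have hkt : 1 ≤ k * t := Nat.one_le_iff_ne_zero.2 (by positivity)
  have hn : (k + 1) * t = k * t + t := by ring
  by_cases hAhit : ∃ a i, L (f a) = Sum.inl i
  · obtain ⟨a, i, ha⟩ := hAhit
    have hcount : (k + 1) * t = #{b | L (f b) = Sum.inl i}
        + #{b | L (f b) = Sum.inr (Sum.inl i)} := by
      simpa [sum_pair] using card_eq_sum_card_fiberwise (s := univ)
        (t := {Sum.inl i, Sum.inr (Sum.inl i)}) (f := L ∘ f) fun b _ => by
          simpa using eq_inl_or_eq_inr_inl_of_embedding hk hf hblueB hblueAA hblueAB hblueCA ha b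
    have hAle := hA i ▸ card_filter_comp_le hinj (L · = Sum.inl i)
    have hBle := hB i
    omega
  · push Not at hAhit
    have hcount : (k + 1) * t = ∑ i, #{a | L (f a) = Sum.inr (Sum.inl i)}
        + #{a | L (f a) = Sum.inr (Sum.inr ())} := by
      simpa [Fintype.sum_sum_type, hAhit] using
        card_eq_sum_card_fiberwise (s := univ) (t := univ) (f := L ∘ f) fun b _ => mem_univ _
    have hCle := hC ▸ card_filter_comp_le hinj (L · = Sum.inr (Sum.inr ()))
    have hBle : ∑ i, #{a | L (f a) = Sum.inr (Sum.inl i)} ≤ k * t := by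
      simpa using sum_le_sum fun i (_ : i ∈ univ) => hB i
    omega

/-- The explicit colouring in the proof of the lower bound contains no red `P_n^k`.
The vertex set is partitioned (via the labelling `L`) into sets `A_1,…,A_k` of size `kt−1`,
`B_1,…,B_k` of size `2t−1` and `C` of size `t−1`, with colours as in the construction. -/
theorem lower_bound_construction {V : Type} [Fintype V] (k t : ℕ) (hk : 2 ≤ k) (ht : 1 ≤ t)
    (R : SimpleGraph V) (L : V → Fin k ⊕ Fin k ⊕ Unit)
    (hcard : Fintype.card V = t * (k+1)^2 - 2*k - 1)
    (hA : ∀ i : Fin k, Nat.card {v // L v = Sum.inl i} = k*t - 1)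
    (hB : ∀ i : Fin k, Nat.card {v // L v = Sum.inr (Sum.inl i)} = 2*t - 1)
    (hC : Nat.card {v // L v = Sum.inr (Sum.inr ())} = t - 1)
    (hredA : ∀ u v (i : Fin k), L u = Sum.inl i → L v = Sum.inl i → u ≠ v → R.Adj u v)
    (hblueB : ∀ u v (i : Fin k), L u = Sum.inr (Sum.inl i) → L v = Sum.inr (Sum.inl i) →
      ¬ R.Adj u v)
    (hblueAA : ∀ u v (i j : Fin k), i ≠ j → L u = Sum.inl i → L v = Sum.inl j → ¬ R.Adj u v)
    (hredBB : ∀ u v (i j : Fin k), i ≠ j → L u = Sum.inr (Sum.inl i) →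
      L v = Sum.inr (Sum.inl j) → R.Adj u v)
    (hredAB : ∀ u v (i : Fin k), L u = Sum.inl i → L v = Sum.inr (Sum.inl i) → R.Adj u v)
    (hblueAB : ∀ u v (i j : Fin k), i ≠ j → L u = Sum.inl i → L v = Sum.inr (Sum.inl j) →
      ¬ R.Adj u v)
    (hblueCA : ∀ u v (i : Fin k), L u = Sum.inr (Sum.inr ()) → L v = Sum.inl i → ¬ R.Adj u v)
    (hredCB : ∀ u v (i : Fin k), L u = Sum.inr (Sum.inr ()) → L v = Sum.inr (Sum.inl i) →
      R.Adj u v) :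
    ¬ Embeds (pathPower ((k+1)*t) k) R :=
  lower_bound_construction_general k t hk ht R L hA hC hblueB hblueAA hblueAB hblueCA
end

section
/- For every collection of odd cycle lengths ℓ_1, …, ℓ_r with ℓ_s > 2^s for each s, the homomorphism Ramsey number satisfies R_hom(C_{ℓ_1}, …, C_{ℓ_r}) = 2^r + 1. That is: (a) every r-colouring of the edges of K_{2^r+1} admits some colour i and a graph homomorphism from C_{ℓ_i} into the subgraph of colour i; (b) there is an r-colouring of the edges of K_{2^r} for which no such homomorphism exists for any i. -/
open SimpleGraph Finset

/-! An `r`-colouring of `K_{2^r + 1}`: the top colour, on these `2^r + 1` vertices, either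
contains an odd cycle, of length at most `2^r + 1 ≤ ℓ_r`, or is bipartite; then one of its two
sides has `2^(r-1) + 1` vertices and uses only the remaining `r - 1` colours, and we recurse.
An odd closed walk of length `m ≤ ℓ` becomes one of length `ℓ` by going back and forth along an
edge, i.e. a homomorphic image of `C_ℓ`.

Conversely, colour the pair `{u, v}` of `K_{2^r} = {0, …, 2^r - 1}` by the highest bit in which
`u` and `v` differ: colour class `i` is bipartite, split by bit `i`, so it has no odd cycle. -/

theorem cyclePower_one (n : ℕ) : cyclePower n 1 = cycleGraph n := by
  ext i j
  rw [cycleGraph_adj']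
  simp only [cyclePower, Nat.dist, ne_eq, Fin.ext_iff]
  rcases le_or_gt i j with hij | hij
  · rw [Fin.coe_sub_iff_le.mpr hij]
    rcases hij.eq_or_lt with h | h
    · subst h; simp [Fin.coe_sub_iff_le.mpr le_rfl]
    · rw [Fin.coe_sub_iff_lt.mpr h]; omega
  · rw [Fin.coe_sub_iff_le.mpr hij.le, Fin.coe_sub_iff_lt.mpr hij]; omega

theorem homTo_iff_nonempty_hom {α β : Type*} {H : SimpleGraph α} {G : SimpleGraph β} :
    HomTo H G ↔ Nonempty (H →g G) :=
  ⟨fun ⟨f, hf⟩ => ⟨⟨f, hf _ _⟩⟩, fun ⟨f⟩ => ⟨f, fun _ _ => f.map_rel⟩⟩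

namespace SimpleGraph

variable {V W : Type*} {G : SimpleGraph V} {H : SimpleGraph W}

def HasOddLoopLE (G : SimpleGraph V) (n : ℕ) : Prop :=
  ∃ (u : V) (w : G.Walk u u), Odd w.length ∧ w.length ≤ n

namespace Walk

lemma adj_getVert_of_sub_val_eq_one {u : V} (w : G.Walk u u) {i j : Fin w.length}
    (h : (j - i).val = 1) : G.Adj (w.getVert i) (w.getVert j) := by
  rcases le_or_gt i j with hij | hij
  · rw [Fin.coe_sub_iff_le.mpr hij] at h
    rw [show (j : ℕ) = i + 1 by omega]
    exact w.adj_getVert_succ (by omega)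
  · rw [Fin.coe_sub_iff_lt.mpr hij] at h
    have hwrap := w.adj_getVert_succ (i := i) (by omega)
    rw [show (i : ℕ) + 1 = w.length by omega, getVert_length] at hwrap
    rwa [show (j : ℕ) = 0 by omega, w.getVert_zero]

def cycleGraphHom {u : V} (w : G.Walk u u) : cycleGraph w.length →g G where
  toFun i := w.getVert i
  map_rel' h := (cycleGraph_adj'.mp h).elim (fun h => (w.adj_getVert_of_sub_val_eq_one h).symm)
    w.adj_getVert_of_sub_val_eq_one

lemma exists_length_eq_add_two_mul {u : V} (w : G.Walk u u) (hw : ¬ w.Nil) (k : ℕ) :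
    ∃ w' : G.Walk u u, w'.length = w.length + 2 * k := by
  induction k with
  | zero => exact ⟨w, rfl⟩
  | succ k ih =>
    obtain ⟨w', hw'⟩ := ih
    exact ⟨cons (w.adj_snd hw) (cons (w.adj_snd hw).symm w'), by simp only [length_cons]; omega⟩

lemma exists_loops_of_getVert_eq {u : V} (w : G.Walk u u) {i j : ℕ} (hij : i < j)
    (hj : j ≤ w.length) (h : w.getVert i = w.getVert j) :
    ∃ c₁ c₂ : G.Walk (w.getVert i) (w.getVert i),
      c₁.length = j - i ∧ c₂.length = w.length - (j - i) := by
  refine ⟨((w.drop i).take (j - i)).copy rfl ?_, ((w.drop j).append (w.take i)).copy h.symm rfl,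
    ?_, ?_⟩
  · rw [drop_getVert, Nat.add_sub_cancel' hij.le, h]
  · simp only [length_copy, take_length, drop_length]; omega
  · simp only [length_copy, length_append, take_length, drop_length]; omega

end Walk

lemma HasOddLoopLE.mono {m n : ℕ} (h : G.HasOddLoopLE m) (hmn : m ≤ n) : G.HasOddLoopLE n :=
  let ⟨u, w, hodd, hle⟩ := h
  ⟨u, w, hodd, hle.trans hmn⟩

lemma HasOddLoopLE.map {n : ℕ} (h : G.HasOddLoopLE n) (f : G →g H) : H.HasOddLoopLE n :=
  let ⟨u, w, hodd, hle⟩ := h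
  ⟨f u, w.map f, by rwa [Walk.length_map], by rwa [Walk.length_map]⟩

/-- A shortest odd closed walk repeats no vertex: at a repeated vertex it splits into two
shorter closed walks, one of which is odd. -/
lemma hasOddLoopLE_card_of_odd_length [Fintype V] {u : V} (w : G.Walk u u)
    (hw : Odd w.length) : G.HasOddLoopLE (Fintype.card V) := by
  induction hn : w.length using Nat.strong_induction_on generalizing u with
  | _ n ih =>
  rcases le_or_gt n (Fintype.card V) with hle | hlt
  · exact ⟨u, w, hn ▸ hw, hn ▸ hle⟩
  have hsplit : ∀ i j, i < j → j < n → w.getVert i = w.getVert j →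
      G.HasOddLoopLE (Fintype.card V) := by
    intro i j hij hj h
    obtain ⟨c₁, c₂, hc₁, hc₂⟩ := w.exists_loops_of_getVert_eq hij (by omega) h
    rcases Nat.even_or_odd (j - i) with heven | hodd
    · refine ih _ (by omega) c₂ ?_ rfl
      rw [hc₂, hn]
      exact Nat.Odd.sub_even (by omega) (hn ▸ hw) heven
    · exact ih _ (by omega) c₁ (hc₁ ▸ hodd) rfl
  obtain ⟨i, hi, j, hj, hij, h⟩ := Finset.exists_ne_map_eq_of_card_lt_of_maps_to
    (s := Finset.range n) (t := Finset.univ) (f := w.getVert) (by simpa) (by simp)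
  rw [Finset.mem_range] at hi hj
  rcases hij.lt_or_gt with hij | hij
  · exact hsplit i j hij hj h
  · exact hsplit j i hij hi h.symm

lemma colorable_two_or_hasOddLoopLE_card [Fintype V] (G : SimpleGraph V) :
    G.Colorable 2 ∨ G.HasOddLoopLE (Fintype.card V) := by
  rw [or_iff_not_imp_left, two_colorable_iff_forall_loop_even]
  push Not
  rintro ⟨u, w, hw⟩
  exact hasOddLoopLE_card_of_odd_length w (Nat.not_even_iff_odd.mp hw)

lemma HasOddLoopLE.nonempty_cycleGraph_hom {n : ℕ} (h : G.HasOddLoopLE n) (hn : Odd n) :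
    Nonempty (cycleGraph n →g G) := by
  obtain ⟨u, w, hodd, hle⟩ := h
  obtain ⟨k, hk⟩ : Even (n - w.length) := Nat.Odd.sub_odd hn hodd
  obtain ⟨w', hw'⟩ := w.exists_length_eq_add_two_mul
    (Walk.not_nil_iff_lt_length.mpr hodd.pos) k
  rw [show n = w'.length by omega]
  exact ⟨w'.cycleGraphHom⟩

lemma exists_isIndepSet_of_colorable_two_induce {S : Finset V}
    (hS : (G.induce (S : Set V)).Colorable 2) {n : ℕ} (hn : 2 * n < #S) :
    ∃ T ⊆ S, #T = n + 1 ∧ G.IsIndepSet (T : Set V) := by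
  classical
  obtain ⟨c⟩ := hS
  let side : V → Fin 2 := fun v => if hv : v ∈ S then c ⟨v, hv⟩ else 0
  obtain ⟨b, -, hb⟩ := Finset.exists_lt_card_fiber_of_mul_lt_card_of_maps_to
    (s := S) (t := Finset.univ) (f := side) (fun _ _ => Finset.mem_univ _) (by simpa using hn)
  obtain ⟨T, hT, hTcard⟩ := Finset.exists_subset_card_eq hb
  have hTS : T ⊆ S := hT.trans (Finset.filter_subset _ _)
  refine ⟨T, hTS, hTcard, fun u hu v hv _ hadj => ?_⟩
  have hside : ∀ x (hx : x ∈ T), c ⟨x, hTS hx⟩ = b := fun x hx => by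
    simpa [side, hTS hx] using (Finset.mem_filter.mp (hT hx)).2
  exact c.valid (v := ⟨u, hTS hu⟩) (w := ⟨v, hTS hv⟩) hadj
    ((hside u hu).trans (hside v hv).symm)

theorem exists_hasOddLoopLE_of_pairs_covered {r k : ℕ} (G : Fin r → SimpleGraph V) (hk : k ≤ r)
    (S : Finset V) (hS : #S = 2 ^ k + 1)
    (hadj : ∀ u ∈ S, ∀ v ∈ S, u ≠ v → ∃ i : Fin r, (i : ℕ) < k ∧ (G i).Adj u v) :
    ∃ i : Fin r, (G i).HasOddLoopLE (2 ^ ((i : ℕ) + 1) + 1) := by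
  induction k generalizing S with
  | zero =>
    obtain ⟨u, hu, v, hv, huv⟩ := Finset.one_lt_card.mp (by omega : 1 < #S)
    obtain ⟨i, hi, -⟩ := hadj u hu v hv huv
    exact absurd hi (Nat.not_lt_zero _)
  | succ k ih =>
    let i₀ : Fin r := ⟨k, hk⟩
    rcases ((G i₀).induce (S : Set V)).colorable_two_or_hasOddLoopLE_card with hbip | hodd
    · obtain ⟨T, hTS, hT, hind⟩ :=
        exists_isIndepSet_of_colorable_two_induce hbip (n := 2 ^ k) (by rw [hS, pow_succ]; omega)
      refine ih (by omega) T hT fun u hu v hv huv => ?_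
      obtain ⟨i, hi, hiuv⟩ := hadj u (hTS hu) v (hTS hv) huv
      refine ⟨i, (Nat.lt_succ_iff.mp hi).lt_of_ne fun hik => ?_, hiuv⟩
      exact hind hu hv huv (by rwa [show i = i₀ from Fin.ext hik] at hiuv)
    · refine ⟨i₀, (hodd.map (Embedding.induce _).toHom).mono ?_⟩
      simp [hS, i₀]

lemma Colorable.isEmpty_cycleGraph_hom (hH : H.Colorable 2) {n : ℕ} (hn : Odd n) (h3 : 3 ≤ n) :
    IsEmpty (cycleGraph n →g H) := by
  refine ⟨fun f => ?_⟩
  have h := (hH.of_hom f).chromaticNumber_le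
  rw [chromaticNumber_cycleGraph_of_odd n (by omega) hn] at h
  exact absurd h (by decide)

end SimpleGraph

lemma Nat.log2_xor_lt {a b r : ℕ} (hr : 0 < r) (ha : a < 2 ^ r) (hb : b < 2 ^ r) :
    (a ^^^ b).log2 < r := by
  rcases eq_or_ne (a ^^^ b) 0 with h | h
  · simpa [h] using hr
  · exact (Nat.log2_lt h).mpr (Nat.xor_lt_two_pow ha hb)

lemma Nat.testBit_log2_xor_ne {a b : ℕ} (h : a ≠ b) :
    a.testBit (a ^^^ b).log2 ≠ b.testBit (a ^^^ b).log2 := by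
  have hbit := Nat.testBit_log2 (mt xor_eq_zero_iff.mp h)
  rw [Nat.testBit_xor] at hbit
  intro heq
  simp [heq] at hbit

def highestBitColouring {r : ℕ} (hr : 0 < r) (u v : Fin (2 ^ r)) : Fin r :=
  ⟨(u.val ^^^ v.val).log2, Nat.log2_xor_lt hr u.isLt v.isLt⟩

lemma highestBitColouring_comm {r : ℕ} (hr : 0 < r) (u v : Fin (2 ^ r)) :
    highestBitColouring hr u v = highestBitColouring hr v u := by
  simp [highestBitColouring, Nat.xor_comm]

lemma colorable_two_highestBitColouring {r : ℕ} (hr : 0 < r) (i : Fin r) :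
    (fromRel fun u v => highestBitColouring hr u v = i).Colorable 2 := by
  refine (Coloring.mk (fun v : Fin (2 ^ r) => v.val.testBit i) ?_).colorable
  rintro u v ⟨huv, hcol⟩
  simp only [highestBitColouring_comm hr v u, or_self] at hcol
  rw [← hcol]
  exact Nat.testBit_log2_xor_ne (Fin.val_ne_of_ne huv)

/-- `R_hom(C_{ℓ_1},…,C_{ℓ_r}) = 2^r + 1` for odd cycles with `ℓ_s > 2^s`. -/
theorem hom_ramsey_odd_cycles (r : ℕ) (hr : 1 ≤ r) (ℓ : Fin r → ℕ)
    (hodd : ∀ s, Odd (ℓ s)) (hbig : ∀ s : Fin r, 2 ^ (s.val + 1) < ℓ s) :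
    (∀ col : Fin (2^r + 1) → Fin (2^r + 1) → Fin r,
      (∀ u v, col u v = col v u) →
      ∃ i, HomTo (cyclePower (ℓ i) 1) (SimpleGraph.fromRel fun u v => col u v = i)) ∧
    (∃ col : Fin (2^r) → Fin (2^r) → Fin r,
      (∀ u v, col u v = col v u) ∧
      ∀ i, ¬ HomTo (cyclePower (ℓ i) 1) (SimpleGraph.fromRel fun u v => col u v = i)) := by
  refine ⟨fun col _ => ?_, highestBitColouring hr, highestBitColouring_comm hr, fun i => ?_⟩
  · obtain ⟨i, hi⟩ := exists_hasOddLoopLE_of_pairs_covered (fun i => fromRel fun u v => col u v = i)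
      le_rfl univ (by simp) fun u _ v _ huv => ⟨col u v, (col u v).isLt, huv, Or.inl rfl⟩
    refine ⟨i, homTo_iff_nonempty_hom.mpr ?_⟩
    rw [cyclePower_one]
    exact (hi.mono (hbig i)).nonempty_cycleGraph_hom (hodd i)
  · have h3 : 3 ≤ ℓ i := (Nat.le_self_pow (Nat.succ_ne_zero _) 2).trans_lt (hbig i)
    rw [cyclePower_one, homTo_iff_nonempty_hom, not_nonempty_iff]
    exact (colorable_two_highestBitColouring hr i).isEmpty_cycleGraph_hom (hodd i) h3
end
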